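/- arXiv:2501.19385 — 9 statements merged into one kernel-verified Lean document; each statement's English description precedes it below -/
import Mathlib

section
/- Let G be a finite connected simple graph and X a set of vertices of G. Then X is a general position set of G if and only if the connected components of the subgraph of G induced by X are cliques, and the vertex sets of these cliques form an in-transitive, distance-constant partition of X. -/
/-!
If `u, v, w ∈ X` with `u ~ v ~ w` and `u ≠ w` non-adjacent, then `d(u, w) = 2` and `v` lies on a
shortest `u,w`-path; hence every component of `G[X]` is a clique. If `a ~ b` in `X` and `c ∈ X`,
then `|d(a, c) - d(b, c)| ≤ 1`, and a difference of exactly one would put `a` or `b` on a shortest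
path from the other to `c`; hence distances between components are constant. Conversely, a triple
of `X` on a shortest path either lies in three components, contradicting in-transitivity, or has two
vertices at distance `1` in one clique, and distance-constancy turns `d(u,v) + d(v,w) = d(u,w)` into
an impossible equation.
-/

open SimpleGraph

variable {V : Type*}

/-- `S` is a general position set of `G`: no three pairwise distinct vertices of `S`
lie on a common shortest path, i.e. no `v ∈ S` lies strictly between `u, w ∈ S`. -/
def IsGPSet (G : SimpleGraph V) (S : Set V) : Prop :=
  ∀ u ∈ S, ∀ v ∈ S, ∀ w ∈ S, u ≠ v → v ≠ w → u ≠ w →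
    ¬(G.Reachable u w ∧ G.dist u v + G.dist v w = G.dist u w)

/-- Every connected component of the subgraph of `G` induced by `X` is a clique. -/
def ComponentsAreCliques (G : SimpleGraph V) (X : Set V) : Prop :=
  ∀ u v : X, (G.induce X).Reachable u v → u = v ∨ G.Adj u v

/-- The partition of `X` into the vertex sets of the connected components of the
subgraph induced by `X` is distance-constant: the distance (in `G`) between two distinct
components does not depend on the choice of representatives. -/
def ComponentPartitionDistanceConstant (G : SimpleGraph V) (X : Set V) : Prop :=
  ∀ u v u' v' : X, (G.induce X).Reachable u u' → (G.induce X).Reachable v v' →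
    ¬(G.induce X).Reachable u v → G.dist (u : V) v = G.dist (u' : V) v'

/-- The partition of `X` into the vertex sets of the connected components of the
subgraph induced by `X` is in-transitive: for vertices of three pairwise distinct
components, the triangle inequality for distances in `G` is strict. -/
def ComponentPartitionInTransitive (G : SimpleGraph V) (X : Set V) : Prop :=
  ∀ u v w : X, ¬(G.induce X).Reachable u v → ¬(G.induce X).Reachable v w →
    ¬(G.induce X).Reachable u w →
    G.dist (u : V) w ≠ G.dist (u : V) v + G.dist (v : V) w

variable {G : SimpleGraph V} {X : Set V}

lemma coe_ne_of_not_reachable {u v : X} (h : ¬(G.induce X).Reachable u v) : (u : V) ≠ v :=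
  fun huv => h (Subtype.ext huv ▸ .rfl)

theorem isGPSet_of_dist_add_ne
    (h : ∀ u v w : X, (u : V) ≠ v → (v : V) ≠ w → (u : V) ≠ w →
      G.dist (u : V) v + G.dist (v : V) w ≠ G.dist (u : V) w) :
    IsGPSet G X := by
  rintro u hu v hv w hw huv hvw huw ⟨-, heq⟩
  exact h ⟨u, hu⟩ ⟨v, hv⟩ ⟨w, hw⟩ huv hvw huw heq

namespace IsGPSet

variable (hG : G.Connected) (hX : IsGPSet G X)
include hG hX

theorem dist_add_ne {u v w : X} (huv : (u : V) ≠ v) (hvw : (v : V) ≠ w) (huw : (u : V) ≠ w) :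
    G.dist (u : V) v + G.dist (v : V) w ≠ G.dist (u : V) w :=
  fun heq => hX u u.2 v v.2 w w.2 huv hvw huw ⟨hG.preconnected _ _, heq⟩

theorem adj_of_adj_of_adj {u v w : X} (huv : G.Adj u v) (hvw : G.Adj v w) (huw : (u : V) ≠ w) :
    G.Adj u w := by
  by_contra hnadj
  have hdist : G.dist (u : V) w = 2 := by
    have htri := hG.dist_triangle (u := (u : V)) (v := v) (w := w)
    have h0 : G.dist (u : V) w ≠ 0 := fun h => huw (hG.dist_eq_zero_iff.mp h)
    have h1 : G.dist (u : V) w ≠ 1 := fun h => hnadj (dist_eq_one_iff_adj.mp h)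
    rw [dist_eq_one_iff_adj.mpr huv, dist_eq_one_iff_adj.mpr hvw] at htri
    omega
  apply hX.dist_add_ne hG huv.ne hvw.ne huw
  rw [dist_eq_one_iff_adj.mpr huv, dist_eq_one_iff_adj.mpr hvw, hdist]

theorem componentsAreCliques : ComponentsAreCliques G X := by
  rintro u v ⟨p⟩
  induction p with
  | nil => exact .inl rfl
  | @cons a b c hab p ih =>
    rcases ih with rfl | hbc
    · exact .inr hab
    · by_cases hac : a = c
      · exact .inl hac
      · exact .inr (hX.adj_of_adj_of_adj hG hab hbc (Subtype.coe_injective.ne hac))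

theorem dist_eq_of_adj {a b c : X} (hab : G.Adj a b) (hac : (a : V) ≠ c) (hbc : (b : V) ≠ c) :
    G.dist (a : V) c = G.dist (b : V) c := by
  have hab' : G.dist (a : V) b = 1 := dist_eq_one_iff_adj.mpr hab
  have hba' : G.dist (b : V) a = 1 := dist_eq_one_iff_adj.mpr hab.symm
  have hacb := hG.dist_triangle (u := (a : V)) (v := b) (w := c)
  have hbca := hG.dist_triangle (u := (b : V)) (v := a) (w := c)
  have hba := hX.dist_add_ne hG hab.ne.symm hac hbc
  have hab := hX.dist_add_ne hG hab.ne hbc hac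
  omega

theorem dist_eq_of_reachable {u u' v : X} (huu' : (G.induce X).Reachable u u')
    (huv : ¬(G.induce X).Reachable u v) : G.dist (u : V) v = G.dist (u' : V) v := by
  rcases hX.componentsAreCliques hG u u' huu' with rfl | hadj
  · rfl
  · exact hX.dist_eq_of_adj hG hadj (coe_ne_of_not_reachable huv)
      (coe_ne_of_not_reachable fun h => huv (huu'.trans h))

theorem componentPartitionDistanceConstant : ComponentPartitionDistanceConstant G X := by
  intro u v u' v' huu' hvv' huv
  calc G.dist (u : V) v = G.dist (u' : V) v := hX.dist_eq_of_reachable hG huu' huv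
    _ = G.dist (v : V) u' := dist_comm
    _ = G.dist (v' : V) u' :=
        hX.dist_eq_of_reachable hG hvv' fun h => huv (huu'.trans h.symm)
    _ = G.dist (u' : V) v' := dist_comm

theorem componentPartitionInTransitive : ComponentPartitionInTransitive G X :=
  fun _ _ _ huv hvw huw heq => hX.dist_add_ne hG (coe_ne_of_not_reachable huv)
    (coe_ne_of_not_reachable hvw) (coe_ne_of_not_reachable huw) heq.symm

end IsGPSet

theorem ComponentsAreCliques.dist_eq_one (hC : ComponentsAreCliques G X) {u v : X}
    (huv : (G.induce X).Reachable u v) (hne : (u : V) ≠ v) : G.dist (u : V) v = 1 :=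
  dist_eq_one_iff_adj.mpr ((hC u v huv).resolve_left (Subtype.coe_injective.ne_iff.mp hne))

theorem isGPSet_of_componentPartition (hC : ComponentsAreCliques G X)
    (hD : ComponentPartitionDistanceConstant G X) (hI : ComponentPartitionInTransitive G X) :
    IsGPSet G X := by
  refine isGPSet_of_dist_add_ne fun u v w huv hvw huw heq => ?_
  by_cases ruv : (G.induce X).Reachable u v
  · by_cases rvw : (G.induce X).Reachable v w
    · rw [hC.dist_eq_one ruv huv, hC.dist_eq_one rvw hvw,
        hC.dist_eq_one (ruv.trans rvw) huw] at heq
      omega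
    · have := hD u w v w ruv .rfl fun h => rvw (ruv.symm.trans h)
      rw [hC.dist_eq_one ruv huv] at heq
      omega
  · by_cases rvw : (G.induce X).Reachable v w
    · have := hD u v u w .rfl rvw ruv
      rw [hC.dist_eq_one rvw hvw] at heq
      omega
    · by_cases ruw : (G.induce X).Reachable u w
      · have := hD u v w v ruw .rfl ruv
        rw [hC.dist_eq_one ruw huw, dist_comm (u := (v : V))] at heq
        omega
      · exact hI u v w ruv rvw ruw heq.symm

theorem isGPSet_iff_cliques_in_transitive_distance_constant_general
    (G : SimpleGraph V) (hG : G.Connected) (X : Set V) :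
    IsGPSet G X ↔
      ComponentsAreCliques G X ∧ ComponentPartitionDistanceConstant G X ∧
        ComponentPartitionInTransitive G X :=
  ⟨fun hX => ⟨hX.componentsAreCliques hG, hX.componentPartitionDistanceConstant hG,
      hX.componentPartitionInTransitive hG⟩,
    fun ⟨hC, hD, hI⟩ => isGPSet_of_componentPartition hC hD hI⟩

theorem isGPSet_iff_cliques_in_transitive_distance_constant
    [Fintype V] (G : SimpleGraph V) (hG : G.Connected) (X : Set V) :
    IsGPSet G X ↔
      ComponentsAreCliques G X ∧ ComponentPartitionDistanceConstant G X ∧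
        ComponentPartitionInTransitive G X :=
  isGPSet_iff_cliques_in_transitive_distance_constant_general G hG X
end

section
/- If G is a finite connected simple graph with n(G) vertices, then gp(G) ≤ n(G) − diam(G) + 1, where diam(G) is the diameter of G. -/
/-!
Pick `u, v` with `dist u v = diam G` and a shortest `u,v`-path `p`; it has `diam G + 1`
vertices. Along a shortest walk the distance between the `i`-th and `j`-th vertex is `j - i`,
so of any three vertices of `p` the middle one lies on a shortest path between the other two.
Hence a general position set meets `p` in at most two vertices and has at most
`n - (diam G + 1) + 2` vertices.
-/

open SimpleGraph

variable {V : Type*}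

/-- The general position number of `G`. -/
noncomputable def gpNum (G : SimpleGraph V) [Fintype V] : ℕ :=
  sSup {n | ∃ S : Finset V, IsGPSet G ↑S ∧ S.card = n}

namespace SimpleGraph.Walk

variable {G : SimpleGraph V} {u v : V}

lemma dist_getVert_getVert_of_length_eq_dist {p : G.Walk u v} (hp : p.length = G.dist u v)
    {i j : ℕ} (hij : i ≤ j) (hj : j ≤ p.length) :
    G.dist (p.getVert i) (p.getVert j) = j - i := by
  have h := length_eq_dist_of_subwalk hp ((isSubwalk_drop _ i).trans (p.isSubwalk_take j))
  rw [drop_length, take_length, take_getVert, min_eq_left hj, min_eq_right hij] at h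
  exact h.symm

end SimpleGraph.Walk

open Finset

section

variable {G : SimpleGraph V} {u v : V}

lemma gpNum_le_of_forall_card_le [Fintype V] {m : ℕ}
    (h : ∀ S : Finset V, IsGPSet G S → S.card ≤ m) : gpNum G ≤ m :=
  csSup_le ⟨0, ∅, fun _ hx ↦ by simp at hx, rfl⟩ fun _ ⟨S, hS, hn⟩ ↦ hn ▸ h S hS

lemma IsGPSet.not_getVert_mem_of_lt_of_lt {S : Set V} (hS : IsGPSet G S)
    {p : G.Walk u v} (hp : p.length = G.dist u v) {i j k : ℕ} (hij : i < j) (hjk : j < k)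
    (hk : k ≤ p.length) :
    ¬(p.getVert i ∈ S ∧ p.getVert j ∈ S ∧ p.getVert k ∈ S) := by
  rintro ⟨hi, hj, hk'⟩
  have hd {a b : ℕ} (hab : a < b) (hb : b ≤ p.length) :
      p.getVert a ≠ p.getVert b ∧ G.Reachable (p.getVert a) (p.getVert b) :=
    dist_ne_zero_iff_ne_and_reachable.mp <| by
      rw [p.dist_getVert_getVert_of_length_eq_dist hp hab.le hb]; omega
  have hik := hij.trans hjk
  refine hS _ hi _ hj _ hk' (hd hij (hjk.le.trans hk)).1 (hd hjk hk).1 (hd hik hk).1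
    ⟨(hd hik hk).2, ?_⟩
  simp only [p.dist_getVert_getVert_of_length_eq_dist hp, hij.le, hjk.le, hik.le, hk,
    hjk.le.trans hk]
  omega

lemma IsGPSet.card_inter_support_le_two [DecidableEq V] {S : Finset V} (hS : IsGPSet G S)
    {p : G.Walk u v} (hp : p.length = G.dist u v) : #(S ∩ p.support.toFinset) ≤ 2 := by
  set I := {i ∈ range (p.length + 1) | p.getVert i ∈ S}
  have hsub : S ∩ p.support.toFinset ⊆ I.image p.getVert := by
    intro x hx
    obtain ⟨hxS, hxp⟩ := mem_inter.mp hx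
    obtain ⟨i, rfl, hi⟩ := Walk.mem_support_iff_exists_getVert.mp (List.mem_toFinset.mp hxp)
    exact mem_image_of_mem _ (mem_filter.mpr ⟨mem_range.mpr (by omega), hxS⟩)
  refine (card_le_card hsub).trans (card_image_le.trans ?_)
  by_contra! h
  let e := I.orderEmbOfFin rfl
  have he (a : Fin #I) : e a ≤ p.length ∧ p.getVert (e a) ∈ S := by
    have := mem_filter.mp (I.orderEmbOfFin_mem rfl a)
    exact ⟨Nat.lt_succ_iff.mp (mem_range.mp this.1), this.2⟩
  exact hS.not_getVert_mem_of_lt_of_lt hp (i := e ⟨0, by omega⟩) (j := e ⟨1, by omega⟩)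
    (k := e ⟨2, by omega⟩) (e.strictMono (by simp [Fin.lt_def]))
    (e.strictMono (by simp [Fin.lt_def])) (he _).1 ⟨(he _).2, (he _).2, (he _).2⟩

lemma IsGPSet.card_add_dist_le [Fintype V] {S : Finset V} (hS : IsGPSet G S) (u v : V) :
    #S + G.dist u v ≤ Fintype.card V + 1 := by
  classical
  by_cases huv : G.Reachable u v
  · obtain ⟨p, hpath, hp⟩ := huv.exists_path_of_dist
    have hinter := hS.card_inter_support_le_two hp
    set P := p.support.toFinset
    have hP : #P = G.dist u v + 1 := by
      rw [List.toFinset_card_of_nodup hpath.support_nodup, p.length_support, hp]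
    have hout : #(S \ P) ≤ Fintype.card V - #P := by
      rw [← card_compl]; exact card_le_card fun x hx ↦ mem_compl.mpr (mem_sdiff.mp hx).2
    have := card_inter_add_card_sdiff S P
    have := P.card_le_univ
    omega
  · rw [dist_eq_zero_of_not_reachable huv]
    exact (S.card_le_univ).trans (Nat.le_succ _)

end

theorem gp_le_order_sub_diam_add_one_general [Fintype V] (G : SimpleGraph V) :
    gpNum G ≤ Fintype.card V - G.diam + 1 := by
  refine gpNum_le_of_forall_card_le fun S hS ↦ ?_
  cases isEmpty_or_nonempty V
  · simp [eq_empty_of_isEmpty S]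
  obtain ⟨u, v, huv⟩ := G.exists_dist_eq_diam
  have := hS.card_add_dist_le u v
  omega

theorem gp_le_order_sub_diam_add_one [Fintype V] (G : SimpleGraph V)
    (hG : G.Connected) :
    gpNum G ≤ Fintype.card V - G.diam + 1 :=
  gp_le_order_sub_diam_add_one_general G
end

section
/- (Isometric Cover Lemma) Let G be a finite connected simple graph and let {H_1, …, H_k} be an isometric cover of G. Then gp(G) ≤ gp(H_1) + gp(H_2) + ⋯ + gp(H_k). -/
open SimpleGraph

variable {V : Type*}

/-- The subgraph of `G` induced by the vertex set `W` is isometric in `G`: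
any two of its vertices are joined by a path inside it, and its distances
agree with those of `G`. -/
def IsIsometricSubset (G : SimpleGraph V) (W : Finset V) : Prop :=
  ∀ u v : (W : Set V), (G.induce (W : Set V)).Reachable u v ∧
    (G.induce (W : Set V)).dist u v = G.dist (u : V) v

open Finset

section GeneralPosition

variable {V' : Type*} {G : SimpleGraph V} {G' : SimpleGraph V'}

theorem card_le_gpNum [Fintype V] {S : Finset V} (hS : IsGPSet G S) : #S ≤ gpNum G :=
  le_csSup ⟨Fintype.card V, by rintro _ ⟨T, -, rfl⟩; exact card_le_univ T⟩ ⟨S, hS, rfl⟩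

theorem gpNum_le [Fintype V] {n : ℕ} (h : ∀ S : Finset V, IsGPSet G S → #S ≤ n) : gpNum G ≤ n :=
  csSup_le ⟨0, ∅, by simp [IsGPSet], rfl⟩ (by rintro _ ⟨S, hS, rfl⟩; exact h S hS)

theorem IsGPSet.preimage (f : G' ↪g G) (hf : ∀ u v, G'.dist u v = G.dist (f u) (f v))
    {S : Set V} (hS : IsGPSet G S) : IsGPSet G' (f ⁻¹' S) := by
  rintro u hu v hv w hw huv hvw huw ⟨hreach, hsum⟩
  refine hS _ hu _ hv _ hw (f.injective.ne huv) (f.injective.ne hvw) (f.injective.ne huw)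
    ⟨hreach.map f.toHom, ?_⟩
  rwa [← hf, ← hf, ← hf]

theorem IsGPSet.card_inter_le_gpNum_induce [DecidableEq V] {W : Finset V}
    (hW : IsIsometricSubset G W) {S : Finset V} (hS : IsGPSet G S) :
    #(S ∩ W) ≤ gpNum (G.induce (W : Set V)) := by
  have htrace : IsGPSet (G.induce (W : Set V)) ↑(S.subtype (· ∈ W)) := by
    convert hS.preimage (Embedding.induce (W : Set V)) (fun u v => (hW u v).2) using 1
    ext; simp
  simpa [card_subtype, filter_mem_eq_inter] using card_le_gpNum htrace

end GeneralPosition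

theorem Finset.card_le_sum_card_inter_of_cover {α ι : Type*} [DecidableEq α] [Fintype ι]
    {s : Finset α} {t : ι → Finset α} (h : ∀ a ∈ s, ∃ i, a ∈ t i) :
    #s ≤ ∑ i, #(s ∩ t i) :=
  calc #s ≤ #(univ.biUnion fun i => s ∩ t i) := card_le_card fun a ha => by
        obtain ⟨i, hi⟩ := h a ha
        exact mem_biUnion.2 ⟨i, mem_univ i, mem_inter.2 ⟨ha, hi⟩⟩
    _ ≤ ∑ i, #(s ∩ t i) := card_biUnion_le

theorem gp_le_sum_gp_of_isometric_cover_general [Fintype V] (G : SimpleGraph V)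
    (k : ℕ) (H : Fin k → Finset V)
    (hiso : ∀ i, IsIsometricSubset G (H i))
    (hcover : ∀ v : V, ∃ i, v ∈ H i) :
    gpNum G ≤ ∑ i, gpNum (G.induce ((H i : Set V))) := by
  classical
  exact gpNum_le fun S hS => calc
    #S ≤ ∑ i, #(S ∩ H i) := card_le_sum_card_inter_of_cover fun v _ => hcover v
    _ ≤ ∑ i, gpNum (G.induce (H i : Set V)) :=
      sum_le_sum fun i _ => hS.card_inter_le_gpNum_induce (hiso i)

/-- Isometric Cover Lemma. -/
theorem gp_le_sum_gp_of_isometric_cover [Fintype V] (G : SimpleGraph V)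
    (hG : G.Connected) (k : ℕ) (H : Fin k → Finset V)
    (hiso : ∀ i, IsIsometricSubset G (H i))
    (hcover : ∀ v : V, ∃ i, v ∈ H i) :
    gpNum G ≤ ∑ i, gpNum (G.induce ((H i : Set V))) :=
  gp_le_sum_gp_of_isometric_cover_general G k H hiso hcover
end

section
/- If G is a finite connected bipartite simple graph on at least three vertices, then gp(G) ≤ α(G), where α(G) is the independence number of G. Moreover, if the diameter of G is 2 or 3, then gp(G) = α(G). -/
open SimpleGraph

variable {V : Type*}

/-- The independence number of `G`. -/
noncomputable def indepNum' (G : SimpleGraph V) [Fintype V] : ℕ :=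
  sSup {n | ∃ S : Finset V, (∀ u ∈ S, ∀ v ∈ S, ¬G.Adj u v) ∧ S.card = n}

private lemma fin2_aux : ∀ x y z : Fin 2, x ≠ y → (x = z ↔ y ≠ z) := by decide

private lemma fin2_aux' : ∀ x y z : Fin 2, y ≠ z → (x = y ↔ ¬(x = z)) := by decide

private lemma walk_parity {G : SimpleGraph V} (c : G.Coloring (Fin 2)) {a b : V}
    (p : G.Walk a b) : c a = c b ↔ Even p.length := by
  induction p with
  | nil => simp
  | @cons u x b h p ih =>
    rw [Walk.length_cons, Nat.even_add_one, ← ih]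
    exact fin2_aux _ _ _ (c.valid h)

private lemma dist_parity {G : SimpleGraph V} (hG : G.Connected) (c : G.Coloring (Fin 2))
    (u v : V) : c u = c v ↔ Even (G.dist u v) := by
  obtain ⟨p, hp⟩ := hG.exists_walk_length_eq_dist u v
  rw [← hp]
  exact walk_parity c p

/-- A general position set of size at least 3 in a connected bipartite graph is independent. -/
private lemma gp_indep {G : SimpleGraph V} (hG : G.Connected) (hbip : G.Colorable 2)
    (S : Finset V) (hS : IsGPSet G ↑S) (h3 : 3 ≤ S.card) :
    ∀ u ∈ S, ∀ v ∈ S, ¬G.Adj u v := by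
  classical
  intro u hu v hv hadj
  obtain ⟨w, hw, hwu, hwv⟩ : ∃ w ∈ S, w ≠ u ∧ w ≠ v := by
    by_contra hcon
    push_neg at hcon
    have hsub : S ⊆ {u, v} := by
      intro x hx
      rcases eq_or_ne x u with h | h
      · simp [h]
      · simp [hcon x hx h]
    have := Finset.card_le_card hsub
    have h2 : ({u, v} : Finset V).card ≤ 2 := Finset.card_insert_le _ _ |>.trans (by simp)
    omega
  obtain ⟨c⟩ := hbip
  have hne : u ≠ v := hadj.ne
  have hcuv : c u ≠ c v := c.valid hadj
  have h1 : G.dist u v = 1 := dist_eq_one_iff_adj.mpr hadj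
  have h1' : G.dist v u = 1 := dist_eq_one_iff_adj.mpr hadj.symm
  have tri1 : G.dist w u ≤ G.dist w v + G.dist v u := hG.dist_triangle
  have tri2 : G.dist w v ≤ G.dist w u + G.dist u v := hG.dist_triangle
  have hpar : Even (G.dist w u) ↔ ¬Even (G.dist w v) := by
    rw [← dist_parity hG c, ← dist_parity hG c]
    exact fin2_aux' _ _ _ hcuv
  have hne2 : G.dist w u ≠ G.dist w v := by
    intro h; rw [h] at hpar; tauto
  have hcase : G.dist w u = G.dist w v + 1 ∨ G.dist w v = G.dist w u + 1 := by omega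
  rcases hcase with h | h
  · exact hS w hw v hv u hu hwv hne.symm hwu ⟨hG w u, by omega⟩
  · exact hS w hw u hu v hv hwu hne hwv ⟨hG w v, by omega⟩

theorem gp_le_indepNum_of_bipartite [Fintype V] (G : SimpleGraph V)
    (hG : G.Connected) (hbip : G.Colorable 2) (hcard : 3 ≤ Fintype.card V) :
    gpNum G ≤ indepNum' G ∧
      (G.diam = 2 ∨ G.diam = 3 → gpNum G = indepNum' G) := by
  have hIndBdd : BddAbove {n | ∃ S : Finset V, (∀ u ∈ S, ∀ v ∈ S, ¬G.Adj u v) ∧ S.card = n} := by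
    refine ⟨Fintype.card V, ?_⟩
    rintro n ⟨S, -, rfl⟩
    exact (Finset.card_le_card (Finset.subset_univ S)).trans_eq (Finset.card_univ)
  have hGpBdd : BddAbove {n | ∃ S : Finset V, IsGPSet G ↑S ∧ S.card = n} := by
    refine ⟨Fintype.card V, ?_⟩
    rintro n ⟨S, -, rfl⟩
    exact (Finset.card_le_card (Finset.subset_univ S)).trans_eq (Finset.card_univ)
  have hGpNe : {n | ∃ S : Finset V, IsGPSet G ↑S ∧ S.card = n}.Nonempty :=
    ⟨0, ∅, by intro u hu; simp at hu, rfl⟩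
  have hIndNe : {n | ∃ S : Finset V, (∀ u ∈ S, ∀ v ∈ S, ¬G.Adj u v) ∧ S.card = n}.Nonempty :=
    ⟨0, ∅, by intro u hu; simp at hu, rfl⟩
  -- indepNum ≥ 2
  have hInd2 : 2 ≤ indepNum' G := by
    classical
    obtain ⟨c⟩ := hbip
    obtain ⟨a, b, hab, hcab⟩ := Fintype.exists_ne_map_eq_of_card_lt c (by simp only [Fintype.card_fin]; omega)
    have hmem : 2 ∈ {n | ∃ S : Finset V, (∀ u ∈ S, ∀ v ∈ S, ¬G.Adj u v) ∧ S.card = n} := by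
      refine ⟨{a, b}, ?_, Finset.card_pair hab⟩
      intro u hu v hv hadj
      simp only [Finset.mem_insert, Finset.mem_singleton] at hu hv
      have := c.valid hadj
      rcases hu with rfl | rfl <;> rcases hv with rfl | rfl <;>
        simp_all [hcab]
    exact le_csSup hIndBdd hmem
  have hle : gpNum G ≤ indepNum' G := by
    apply csSup_le hGpNe
    rintro n ⟨S, hS, rfl⟩
    rcases le_or_gt S.card 2 with h2 | h2
    · exact h2.trans hInd2
    · exact le_csSup hIndBdd ⟨S, gp_indep hG hbip S hS (by omega), rfl⟩
  refine ⟨hle, fun hd => ?_⟩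
  refine le_antisymm hle ?_
  apply csSup_le hIndNe
  rintro n ⟨S, hS, rfl⟩
  refine le_csSup hGpBdd ⟨S, ?_, rfl⟩
  intro u hu v hv w hw huv hvw huw
  rintro ⟨hr, heq⟩
  have hdne : G.diam ≠ 0 := by rcases hd with h | h <;> omega
  have hduw : G.dist u w ≤ G.diam := dist_le_diam (ediam_ne_top_of_diam_ne_zero hdne)
  have hd3 : G.diam ≤ 3 := by rcases hd with h | h <;> omega
  have huv0 : G.dist u v ≠ 0 := fun h => huv (hG.dist_eq_zero_iff.mp h)
  have huv1 : G.dist u v ≠ 1 := fun h =>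
    hS u (Finset.mem_coe.mp hu) v (Finset.mem_coe.mp hv) (dist_eq_one_iff_adj.mp h)
  have hvw0 : G.dist v w ≠ 0 := fun h => hvw (hG.dist_eq_zero_iff.mp h)
  have hvw1 : G.dist v w ≠ 1 := fun h =>
    hS v (Finset.mem_coe.mp hv) w (Finset.mem_coe.mp hw) (dist_eq_one_iff_adj.mp h)
  omega
end

section
/- If G is a finite connected simple graph, then gp(G) ≥ ω(G_SR), where G_SR is the strong resolving graph of G and ω denotes the clique number. Moreover, equality holds if and only if G contains a general position set of maximum cardinality gp(G) that induces a complete subgraph of G_SR. -/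
open SimpleGraph

variable {V : Type*}

/-- `x` is maximally distant from `y`. -/
def MaxDistantFrom (G : SimpleGraph V) (x y : V) : Prop :=
  ∀ z, G.Adj x z → G.dist y z ≤ G.dist y x

/-- `x` and `y` are mutually maximally distant in `G`. -/
def MutuallyMaxDistant (G : SimpleGraph V) (x y : V) : Prop :=
  MaxDistantFrom G x y ∧ MaxDistantFrom G y x

/-- The strong resolving graph of `G`: vertices of `G`, with two distinct vertices
adjacent iff they are mutually maximally distant in `G`. -/
def strongResolvingGraph (G : SimpleGraph V) : SimpleGraph V where
  Adj x y := x ≠ y ∧ MutuallyMaxDistant G x y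
  symm := by
    refine ⟨?_⟩
    intro x y ⟨hxy, h1, h2⟩
    exact ⟨hxy.symm, h2, h1⟩
  loopless := by
    refine ⟨?_⟩
    intro x ⟨hxx, _⟩
    exact hxx rfl


lemma clique_isGPSet [Fintype V] (G : SimpleGraph V) (hG : G.Connected) (S : Set V)
    (hS : (strongResolvingGraph G).IsClique S) : IsGPSet G S := by
  intro u hu v hv w hw huv hvw _ ⟨_, hdist⟩
  have hadj_uv := hS hu hv huv
  have hadj_vw := hS hv hw hvw
  -- v is maximally distant from u
  have hmax : MaxDistantFrom G v u := hadj_uv.2.2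
  -- take a geodesic from v to w
  obtain ⟨p, hp⟩ := hG.exists_walk_length_eq_dist v w
  have hpos : 0 < G.dist v w := (hG v w).pos_dist_of_ne hvw
  cases p with
  | nil => exact hvw rfl
  | cons h q =>
    rename_i z
    have hz : G.dist u z ≤ G.dist u v := hmax z h
    have hq : G.dist z w ≤ q.length := SimpleGraph.dist_le q
    have hlen : q.length + 1 = G.dist v w := by simpa using hp
    have htri : G.dist u w ≤ G.dist u z + G.dist z w := hG.dist_triangle
    omega

lemma gpNum_bddAbove [Fintype V] (G : SimpleGraph V) :
    BddAbove {n | ∃ S : Finset V, IsGPSet G ↑S ∧ S.card = n} := by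
  refine ⟨Fintype.card V, ?_⟩
  rintro n ⟨S, -, rfl⟩
  exact S.card_le_univ

theorem gp_ge_cliqueNum_strongResolving [Fintype V] (G : SimpleGraph V)
    (hG : G.Connected) :
    (strongResolvingGraph G).cliqueNum ≤ gpNum G ∧
      (gpNum G = (strongResolvingGraph G).cliqueNum ↔
        ∃ S : Finset V, IsGPSet G ↑S ∧ S.card = gpNum G ∧
          (strongResolvingGraph G).IsClique (S : Set V)) := by
  obtain ⟨s, hs⟩ := (strongResolvingGraph G).exists_isNClique_cliqueNum
  have hsgp : IsGPSet G ↑s := clique_isGPSet G hG _ hs.isClique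
  have h1 : (strongResolvingGraph G).cliqueNum ≤ gpNum G :=
    le_csSup (gpNum_bddAbove G) ⟨s, hsgp, hs.card_eq⟩
  refine ⟨h1, ⟨fun h => ⟨s, hsgp, by rw [h, hs.card_eq], hs.isClique⟩, ?_⟩⟩
  rintro ⟨S, -, hcard, hclique⟩
  have h2 : gpNum G ≤ (strongResolvingGraph G).cliqueNum := by
    rw [← hcard]
    exact SimpleGraph.IsClique.card_le_cliqueNum (tc := hclique)
  exact le_antisymm h2 h1
end

section
/- If G and H are finite connected simple graphs, then gp(G □ H) ≥ gp(G) + gp(H) − 2, where G □ H denotes the Cartesian product of G and H. -/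
open SimpleGraph

variable {V W : Type*}

private lemma box_walk_lower {α β : Type*} {G : SimpleGraph α} {H : SimpleGraph β}
    (hG : G.Connected) (hH : H.Connected) {x y : α × β} (w : (G □ H).Walk x y) :
    G.dist x.1 y.1 + H.dist x.2 y.2 ≤ w.length := by
  induction w with
  | nil => simp [SimpleGraph.dist_self]
  | @cons u v w h p ih =>
    rw [SimpleGraph.Walk.length_cons]
    rcases (SimpleGraph.boxProd_adj.mp h) with ⟨ha, he⟩ | ⟨ha, he⟩
    · have t1 : G.dist u.1 w.1 ≤ G.dist u.1 v.1 + G.dist v.1 w.1 := hG.dist_triangle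
      have t2 : G.dist u.1 v.1 = 1 := SimpleGraph.dist_eq_one_iff_adj.mpr ha
      have t3 : H.dist u.2 w.2 = H.dist v.2 w.2 := by rw [he]
      omega
    · have t1 : H.dist u.2 w.2 ≤ H.dist u.2 v.2 + H.dist v.2 w.2 := hH.dist_triangle
      have t2 : H.dist u.2 v.2 = 1 := SimpleGraph.dist_eq_one_iff_adj.mpr ha
      have t3 : G.dist u.1 w.1 = G.dist v.1 w.1 := by rw [he]
      omega

private lemma boxProd_dist {α β : Type*} {G : SimpleGraph α} {H : SimpleGraph β}
    (hG : G.Connected) (hH : H.Connected) (x y : α × β) :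
    (G □ H).dist x y = G.dist x.1 y.1 + H.dist x.2 y.2 := by
  obtain ⟨a, b⟩ := x
  obtain ⟨c, d⟩ := y
  obtain ⟨p, hp⟩ := hG.exists_walk_length_eq_dist a c
  obtain ⟨q, hq⟩ := hH.exists_walk_length_eq_dist b d
  apply le_antisymm
  · have := SimpleGraph.dist_le ((p.boxProdLeft H b).append (q.boxProdRight G c))
    have hl : ((p.boxProdLeft H b).append (q.boxProdRight G c)).length = p.length + q.length := by
      rw [SimpleGraph.Walk.length_append]
      unfold SimpleGraph.Walk.boxProdLeft SimpleGraph.Walk.boxProdRight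
      exact congrArg₂ (· + ·) (SimpleGraph.Walk.length_map _ _) (SimpleGraph.Walk.length_map _ _)
    rw [hl, hp, hq] at this
    exact this
  · obtain ⟨r, hr⟩ := (hG.boxProd hH).exists_walk_length_eq_dist (a, b) (c, d)
    rw [← hr]
    exact box_walk_lower hG hH r

private lemma gpNum_eq_card {G : SimpleGraph V} [Fintype V] :
    ∃ S : Finset V, IsGPSet G ↑S ∧ S.card = gpNum G := by
  classical
  have hne : {n | ∃ S : Finset V, IsGPSet G ↑S ∧ S.card = n}.Nonempty :=
    ⟨0, ∅, by intro u hu; simp at hu, by simp⟩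
  have hbdd : BddAbove {n | ∃ S : Finset V, IsGPSet G ↑S ∧ S.card = n} := by
    refine ⟨Fintype.card V, fun n hn => ?_⟩
    obtain ⟨S, _, rfl⟩ := hn
    exact S.card_le_univ.trans_eq (by simp)
  have := Nat.sSup_mem hne hbdd
  exact this

private lemma le_gpNum {G : SimpleGraph V} [Fintype V] (S : Finset V) (hS : IsGPSet G ↑S) :
    S.card ≤ gpNum G := by
  have hbdd : BddAbove {n | ∃ S : Finset V, IsGPSet G ↑S ∧ S.card = n} := by
    refine ⟨Fintype.card V, fun n hn => ?_⟩
    obtain ⟨S, _, rfl⟩ := hn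
    exact S.card_le_univ.trans_eq (by simp)
  exact le_csSup hbdd ⟨S, hS, rfl⟩

private lemma one_le_gpNum {G : SimpleGraph V} [Fintype V] (hG : G.Connected) :
    1 ≤ gpNum G := by
  obtain ⟨v⟩ := hG.nonempty
  have : IsGPSet G ↑({v} : Finset V) := by
    intro u hu w hw x hx huw _ _
    simp only [Finset.coe_singleton, Set.mem_singleton_iff] at hu hw
    exact absurd (hu.trans hw.symm) huw
  simpa using le_gpNum {v} this

theorem gp_boxProd_lower [Fintype V] [Fintype W]
    (G : SimpleGraph V) (H : SimpleGraph W)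
    (hG : G.Connected) (hH : H.Connected) :
    gpNum G + gpNum H - 2 ≤ gpNum (G □ H) := by
  classical
  obtain ⟨S, hS, hScard⟩ := gpNum_eq_card (G := G)
  obtain ⟨T, hT, hTcard⟩ := gpNum_eq_card (G := H)
  have hs1 : 1 ≤ gpNum G := one_le_gpNum hG
  have ht1 : 1 ≤ gpNum H := one_le_gpNum hH
  have hSne : S.Nonempty := Finset.card_pos.mp (by omega)
  have hTne : T.Nonempty := Finset.card_pos.mp (by omega)
  obtain ⟨g₀, hg₀⟩ := hSne
  obtain ⟨h₀, hh₀⟩ := hTne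
  set U : Finset (V × W) :=
    ((S.erase g₀).image (fun a => (a, h₀))) ∪ ((T.erase h₀).image (fun c => (g₀, c))) with hUdef
  have hmem : ∀ x : V × W, x ∈ U →
      (x.1 ∈ S ∧ x.1 ≠ g₀ ∧ x.2 = h₀) ∨ (x.2 ∈ T ∧ x.2 ≠ h₀ ∧ x.1 = g₀) := by
    intro x hx
    rw [hUdef, Finset.mem_union, Finset.mem_image, Finset.mem_image] at hx
    rcases hx with ⟨a, ha, rfl⟩ | ⟨c, hc, rfl⟩
    · rw [Finset.mem_erase] at ha
      exact Or.inl ⟨ha.2, ha.1, rfl⟩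
    · rw [Finset.mem_erase] at hc
      exact Or.inr ⟨hc.2, hc.1, rfl⟩
  have hSgp : ∀ a ∈ S, ∀ b ∈ S, ∀ c ∈ S, a ≠ b → b ≠ c → a ≠ c →
      G.dist a b + G.dist b c ≠ G.dist a c := by
    intro a ha b hb c hc h1 h2 h3 heq
    exact hS a (Finset.mem_coe.mpr ha) b (Finset.mem_coe.mpr hb) c (Finset.mem_coe.mpr hc)
      h1 h2 h3 ⟨hG a c, heq⟩
  have hTgp : ∀ a ∈ T, ∀ b ∈ T, ∀ c ∈ T, a ≠ b → b ≠ c → a ≠ c →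
      H.dist a b + H.dist b c ≠ H.dist a c := by
    intro a ha b hb c hc h1 h2 h3 heq
    exact hT a (Finset.mem_coe.mpr ha) b (Finset.mem_coe.mpr hb) c (Finset.mem_coe.mpr hc)
      h1 h2 h3 ⟨hH a c, heq⟩
  have hUgp : IsGPSet (G □ H) ↑U := by
    intro u hu v hv w hw huv hvw huw
    rintro ⟨-, heq⟩
    rw [boxProd_dist hG hH, boxProd_dist hG hH, boxProd_dist hG hH] at heq
    have hu' := hmem u (Finset.mem_coe.mp hu)
    have hv' := hmem v (Finset.mem_coe.mp hv)
    have hw' := hmem w (Finset.mem_coe.mp hw)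
    rcases hu' with ⟨hu1, hu2, hu3⟩ | ⟨hu1, hu2, hu3⟩ <;>
      rcases hv' with ⟨hv1, hv2, hv3⟩ | ⟨hv1, hv2, hv3⟩ <;>
        rcases hw' with ⟨hw1, hw2, hw3⟩ | ⟨hw1, hw2, hw3⟩ <;>
          rw [hu3, hv3, hw3] at heq
    -- case LLL
    · rw [SimpleGraph.dist_self] at heq
      have h1 : u.1 ≠ v.1 := fun h => huv (Prod.ext h (hu3.trans hv3.symm))
      have h2 : v.1 ≠ w.1 := fun h => hvw (Prod.ext h (hv3.trans hw3.symm))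
      have h3 : u.1 ≠ w.1 := fun h => huw (Prod.ext h (hu3.trans hw3.symm))
      exact hSgp u.1 hu1 v.1 hv1 w.1 hw1 h1 h2 h3 (by omega)
    -- case LLR : w = (g₀, w.2)
    · rw [SimpleGraph.dist_self] at heq
      have h1 : u.1 ≠ v.1 := fun h => huv (Prod.ext h (hu3.trans hv3.symm))
      exact hSgp u.1 hu1 v.1 hv1 g₀ hg₀ h1 hv2 hu2 (by omega)
    -- case LRL : v = (g₀, v.2)
    · rw [SimpleGraph.dist_self] at heq
      have t1 : G.dist u.1 w.1 ≤ G.dist u.1 g₀ + G.dist g₀ w.1 := hG.dist_triangle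
      have t2 : 0 < H.dist h₀ v.2 := hH.pos_dist_of_ne (Ne.symm hv2)
      have t3 : 0 < H.dist v.2 h₀ := hH.pos_dist_of_ne hv2
      omega
    -- case LRR : v = (g₀, v.2), w = (g₀, w.2)
    · rw [SimpleGraph.dist_self] at heq
      have h2 : v.2 ≠ w.2 := fun h => hvw (Prod.ext (hv3.trans hw3.symm) h)
      exact hTgp h₀ hh₀ v.2 hv1 w.2 hw1 (Ne.symm hv2) h2 (Ne.symm hw2) (by omega)
    -- case RLL : u = (g₀, u.2)
    · rw [SimpleGraph.dist_self] at heq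
      have h2 : v.1 ≠ w.1 := fun h => hvw (Prod.ext h (hv3.trans hw3.symm))
      exact hSgp g₀ hg₀ v.1 hv1 w.1 hw1 (Ne.symm hv2) h2 (Ne.symm hw2) (by omega)
    -- case RLR : u = (g₀,u.2), v = (v.1,h₀), w = (g₀,w.2)
    · rw [SimpleGraph.dist_self] at heq
      have t1 : H.dist u.2 w.2 ≤ H.dist u.2 h₀ + H.dist h₀ w.2 := hH.dist_triangle
      have t2 : 0 < G.dist g₀ v.1 := hG.pos_dist_of_ne (Ne.symm hv2)
      have t3 : 0 < G.dist v.1 g₀ := hG.pos_dist_of_ne hv2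
      omega
    -- case RRL : u = (g₀,u.2), v = (g₀,v.2), w = (w.1,h₀)
    · rw [SimpleGraph.dist_self] at heq
      have h1 : u.2 ≠ v.2 := fun h => huv (Prod.ext (hu3.trans hv3.symm) h)
      exact hTgp u.2 hu1 v.2 hv1 h₀ hh₀ h1 hv2 hu2 (by omega)
    -- case RRR
    · rw [SimpleGraph.dist_self] at heq
      have h1 : u.2 ≠ v.2 := fun h => huv (Prod.ext (hu3.trans hv3.symm) h)
      have h2 : v.2 ≠ w.2 := fun h => hvw (Prod.ext (hv3.trans hw3.symm) h)
      have h3 : u.2 ≠ w.2 := fun h => huw (Prod.ext (hu3.trans hw3.symm) h)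
      exact hTgp u.2 hu1 v.2 hv1 w.2 hw1 h1 h2 h3 (by omega)
  have hUcard : U.card = (gpNum G - 1) + (gpNum H - 1) := by
    rw [hUdef, Finset.card_union_of_disjoint, Finset.card_image_of_injective,
      Finset.card_image_of_injective, Finset.card_erase_of_mem hg₀,
      Finset.card_erase_of_mem hh₀, hScard, hTcard]
    · intro a b hab; exact (Prod.mk.injEq _ _ _ _).mp hab |>.2
    · intro a b hab; exact (Prod.mk.injEq _ _ _ _).mp hab |>.1
    · rw [Finset.disjoint_left]
      rintro x hx1 hx2
      rw [Finset.mem_image] at hx1 hx2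
      obtain ⟨a, ha, rfl⟩ := hx1
      obtain ⟨c, hc, hac⟩ := hx2
      rw [Finset.mem_erase] at ha
      exact ha.1 ((Prod.mk.injEq _ _ _ _).mp hac).1.symm
  have := le_gpNum U hUgp
  omega
end

section
/- If T and T' are trees, each with at least three vertices, then gp(T □ T') = gp(T) + gp(T'), where T □ T' denotes the Cartesian product. -/
open SimpleGraph

variable {V W : Type*}

namespace GPBox

variable {G T : SimpleGraph V}

lemma dist_add_of_mem_support {u v z : V} (p : G.Walk u v)
    (hp : p.length = G.dist u v) (hz : z ∈ p.support) :
    G.dist u z + G.dist z v = G.dist u v := by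
  classical
  have h1 : G.dist u z ≤ (p.takeUntil z hz).length := G.dist_le _
  have h2 : G.dist z v ≤ (p.dropUntil z hz).length := G.dist_le _
  have h3 : (p.takeUntil z hz).length + (p.dropUntil z hz).length = p.length := by
    rw [← Walk.length_append, Walk.take_spec]
  obtain ⟨q1, hq1⟩ := ((p.takeUntil z hz).reachable).exists_walk_length_eq_dist
  obtain ⟨q2, hq2⟩ := ((p.dropUntil z hz).reachable).exists_walk_length_eq_dist
  have h4 : G.dist u v ≤ q1.length + q2.length := by
    have := G.dist_le (q1.append q2)
    rwa [Walk.length_append] at this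
  omega

/-- In a tree, every path realizes the distance. -/
lemma tree_path_length_eq_dist (hT : T.IsTree) {u v : V} {p : T.Walk u v}
    (hp : p.IsPath) : p.length = T.dist u v := by
  obtain ⟨q, hq⟩ := hT.isConnected.exists_walk_length_eq_dist u v
  have hq' : q.IsPath := q.isPath_of_length_eq_dist hq
  obtain ⟨r, hr1, hr2⟩ := hT.existsUnique_path u v
  rw [hr2 _ hp, ← hr2 _ hq', hq]

lemma dist_adj (hab : G.Adj a b) : G.dist a b = 1 := (dist_eq_one_iff_adj (G := G)).2 hab

lemma tree_adj_dist_ne (hT : T.IsTree) {a b : V} (hab : T.Adj a b) (w : V) :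
    T.dist w a ≠ T.dist w b := by
  obtain ⟨p, hp⟩ := hT.isConnected.exists_walk_length_eq_dist w a
  by_cases hb : b ∈ p.support
  · have := dist_add_of_mem_support p hp hb
    have hba : T.dist b a = 1 := dist_adj hab.symm
    omega
  · have hpp : p.IsPath := p.isPath_of_length_eq_dist hp
    have hcp : (p.concat hab).IsPath := by
      rw [Walk.isPath_def, Walk.support_concat]
      rw [List.nodup_append]
      exact ⟨hpp.support_nodup, List.nodup_singleton _, by
        rintro x hx y hy rfl; simp at hy; exact hb (hy ▸ hx)⟩
    have := tree_path_length_eq_dist hT hcp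
    rw [Walk.length_concat, hp] at this
    omega

lemma tree_adj_dist (hT : T.IsTree) {a b : V} (hab : T.Adj a b) (w : V) :
    T.dist w b = T.dist w a + 1 ∨ T.dist w a = T.dist w b + 1 := by
  have h1 : T.dist w b ≤ T.dist w a + 1 := by
    have := hT.isConnected.dist_triangle (u := w) (v := a) (w := b)
    rw [dist_adj hab] at this; omega
  have h2 : T.dist w a ≤ T.dist w b + 1 := by
    have := hT.isConnected.dist_triangle (u := w) (v := b) (w := a)
    rw [dist_adj hab.symm] at this; omega
  have := tree_adj_dist_ne hT hab w
  omega

/-- `x` lies in the branch of the neighbor `n` of `s`. -/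
def Dir (T : SimpleGraph V) (s n x : V) : Prop :=
  T.Adj s n ∧ T.dist x s = T.dist x n + 1

lemma Dir.ne {s n x : V} (h : Dir T s n x) : x ≠ s := by
  rintro rfl
  have := h.2
  rw [SimpleGraph.dist_self] at this
  omega

lemma dir_exists (hT : T.IsTree) {s x : V} (h : x ≠ s) : ∃ n, Dir T s n x := by
  obtain ⟨p, hp⟩ := hT.isConnected.exists_walk_length_eq_dist s x
  have hlen : 0 < p.length := by
    rw [hp]
    exact hT.isConnected.pos_dist_of_ne (Ne.symm h)
  have hnil : ¬ p.Nil := by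
    rw [Walk.nil_iff_length_eq]; omega
  have hadj : T.Adj s (p.getVert 1) := Walk.adj_snd hnil
  have hmem : p.getVert 1 ∈ p.support := Walk.mem_support_iff_exists_getVert.2 ⟨1, rfl, by omega⟩
  have hadd := dist_add_of_mem_support p hp hmem
  have h1 : T.dist s (p.getVert 1) = 1 := dist_adj hadj
  refine ⟨p.getVert 1, hadj, ?_⟩
  rw [SimpleGraph.dist_comm (u := x) (v := s), SimpleGraph.dist_comm (u := x) (v := p.getVert 1)]
  omega

/-- The path from `x` to `s` through branch neighbor `n`. -/
lemma dir_concat_path (hT : T.IsTree) {s n x : V} (h : Dir T s n x) :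
    ∃ p : T.Walk x s, p.IsPath ∧ p.length = T.dist x s ∧
      (∀ z ∈ p.support, z ≠ s → T.dist x z + T.dist z n = T.dist x n) ∧
      p.getVert (T.dist x n) = n := by
  obtain ⟨q, hq⟩ := hT.isConnected.exists_walk_length_eq_dist x n
  have hqp : q.IsPath := q.isPath_of_length_eq_dist hq
  have hs : s ∉ q.support := by
    intro hs
    have := dist_add_of_mem_support q hq hs
    have h1 : T.dist s n = 1 := dist_adj h.1
    have := h.2
    omega
  have hcp : (q.concat h.1.symm).IsPath := by
    rw [Walk.isPath_def, Walk.support_concat, List.nodup_append]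
    exact ⟨hqp.support_nodup, List.nodup_singleton _, by
      rintro z hz y hy rfl; simp at hy; exact hs (hy ▸ hz)⟩
  refine ⟨q.concat h.1.symm, hcp, ?_, ?_, ?_⟩
  · rw [Walk.length_concat, hq]
    have e := h.2
    omega
  · intro z hz hzs
    rw [Walk.support_concat, List.mem_append] at hz
    rcases hz with hz | hz
    · exact dist_add_of_mem_support q hq hz
    · simp at hz; exact absurd hz hzs
  · rw [Walk.concat_eq_append, Walk.getVert_append, hq]
    simp

lemma dir_unique (hT : T.IsTree) {s n m x : V} (h1 : Dir T s n x) (h2 : Dir T s m x) :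
    n = m := by
  obtain ⟨p1, hp1, hl1, _, hg1⟩ := dir_concat_path hT h1
  obtain ⟨p2, hp2, hl2, _, hg2⟩ := dir_concat_path hT h2
  obtain ⟨r, hr1, hr2⟩ := hT.existsUnique_path x s
  have : p1 = p2 := by rw [hr2 _ hp1, hr2 _ hp2]
  have hd : T.dist x n = T.dist x m := by
    have := h1.2; have := h2.2; omega
  rw [← hg1, ← hg2, this, hd]

lemma dir_mem (hT : T.IsTree) {s n x z : V} (h : Dir T s n x)
    (hz : T.dist x z + T.dist z s = T.dist x s) (hzs : z ≠ s) : Dir T s n z := by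
  obtain ⟨p, hp, hl, hmem, _⟩ := dir_concat_path hT h
  -- z lies on the unique x-s path
  obtain ⟨q1, hq1⟩ := hT.isConnected.exists_walk_length_eq_dist x z
  obtain ⟨q2, hq2⟩ := hT.isConnected.exists_walk_length_eq_dist z s
  have happ : (q1.append q2).IsPath := by
    apply Walk.isPath_of_length_eq_dist
    rw [Walk.length_append, hq1, hq2, hz]
  obtain ⟨r, hr1, hr2⟩ := hT.existsUnique_path x s
  have hpq : p = q1.append q2 := by rw [hr2 _ hp, hr2 _ happ]
  have hzp : z ∈ p.support := by
    rw [hpq, Walk.mem_support_append_iff]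
    left; exact q1.end_mem_support
  have hadd := hmem z hzp hzs
  refine ⟨h.1, ?_⟩
  have h2 := h.2
  omega

lemma dir_btw (hT : T.IsTree) {s n m x y : V} (h1 : Dir T s n x) (h2 : Dir T s m y)
    (hnm : n ≠ m) : T.dist x s + T.dist s y = T.dist x y := by
  obtain ⟨px, hpx⟩ := hT.isConnected.exists_walk_length_eq_dist x s
  obtain ⟨py, hpy⟩ := hT.isConnected.exists_walk_length_eq_dist s y
  have hpxp : px.IsPath := px.isPath_of_length_eq_dist hpx
  have hpyp : py.IsPath := py.isPath_of_length_eq_dist hpy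
  have hsupy : py.support = s :: py.support.tail := py.support_eq_cons
  have hytail : py.support.tail.Nodup ∧ s ∉ py.support.tail := by
    have h := hpyp.support_nodup
    rw [hsupy, List.nodup_cons] at h
    exact ⟨h.2, h.1⟩
  have happ : (px.append py).IsPath := by
    rw [Walk.isPath_def, Walk.support_append, List.nodup_append]
    refine ⟨hpxp.support_nodup, hytail.1, ?_⟩
    intro z hzx z' hzy hzz'
    subst hzz'
    have hzs : z ≠ s := by rintro rfl; exact hytail.2 hzy
    have hzy' : z ∈ py.support := by rw [hsupy]; exact List.mem_cons_of_mem _ hzy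
    have hd1 : T.dist x z + T.dist z s = T.dist x s := dist_add_of_mem_support px hpx hzx
    have hd2 : T.dist s z + T.dist z y = T.dist s y := dist_add_of_mem_support py hpy hzy'
    have hdn : Dir T s n z := dir_mem hT h1 hd1 hzs
    have hdm : Dir T s m z := by
      apply dir_mem hT h2 _ hzs
      have := hd2
      rw [SimpleGraph.dist_comm (u := s) (v := z), SimpleGraph.dist_comm (u := z) (v := y),
        SimpleGraph.dist_comm (u := s) (v := y)] at this
      omega
    exact hnm (dir_unique hT hdn hdm)
  have hlen := tree_path_length_eq_dist hT happ
  rw [Walk.length_append, hpx, hpy] at hlen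
  exact hlen

lemma dir_not_btw (hT : T.IsTree) {s n x y : V} (h1 : Dir T s n x) (h2 : Dir T s n y) :
    T.dist x s + T.dist s y ≠ T.dist x y := by
  have t1 : T.dist x y ≤ T.dist x n + T.dist n y := hT.isConnected.dist_triangle
  have e1 := h1.2
  have e2 := h2.2
  rw [SimpleGraph.dist_comm (u := n) (v := y)] at t1
  rw [SimpleGraph.dist_comm (u := s) (v := y)]
  intro h
  have hx : 1 ≤ T.dist x s := by
    have := h1.ne
    exact hT.isConnected.pos_dist_of_ne h1.ne
  omega

/-- A vertex with at most one neighbor. -/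
def IsLeaf (T : SimpleGraph V) (v : V) : Prop :=
  ∀ a b : V, T.Adj v a → T.Adj v b → a = b

/-- A vertex strictly between two others is not a leaf. -/
lemma btw_not_leaf (hT : T.IsTree) {a v b : V}
    (h : T.dist a v + T.dist v b = T.dist a b) (hva : v ≠ a) (hvb : v ≠ b) :
    ¬ IsLeaf T v := by
  intro hleaf
  obtain ⟨n, hn⟩ := dir_exists hT (Ne.symm hva)
  obtain ⟨m, hm⟩ := dir_exists hT (Ne.symm hvb)
  have : n = m := hleaf n m hn.1 hm.1
  subst this
  exact dir_not_btw hT hn hm h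

lemma leaf_exists (hT : T.IsTree) [Fintype V] (hV : 2 ≤ Fintype.card V) :
    ∃ v, IsLeaf T v := by
  classical
  have hne : Nonempty V := Fintype.card_pos_iff.mp (by omega)
  obtain ⟨p, hp, hmax⟩ := Finset.exists_max_image (Finset.univ ×ˢ Finset.univ)
    (fun p : V × V => T.dist p.1 p.2) (by
      refine ⟨(Classical.arbitrary V, Classical.arbitrary V), by simp⟩)
  obtain ⟨a0, b0, hab0⟩ := Fintype.exists_pair_of_one_lt_card (α := V) (by omega)
  have hpos : 1 ≤ T.dist p.1 p.2 := by
    have h1 : 1 ≤ T.dist a0 b0 := hT.isConnected.pos_dist_of_ne hab0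
    have := hmax (a0, b0) (by simp)
    simpa using le_trans h1 this
  refine ⟨p.2, fun a b ha hb => ?_⟩
  have hda : Dir T p.2 a p.1 := by
    refine ⟨ha, ?_⟩
    rcases tree_adj_dist hT ha p.1 with h | h
    · have := hmax (p.1, a) (by simp)
      simp only at this
      omega
    · exact h
  have hdb : Dir T p.2 b p.1 := by
    refine ⟨hb, ?_⟩
    rcases tree_adj_dist hT hb p.1 with h | h
    · have := hmax (p.1, b) (by simp)
      simp only at this
      omega
    · exact h
  exact dir_unique hT hda hdb

lemma exists_three [Fintype V] (hV : 3 ≤ Fintype.card V) :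
    ∃ a b c : V, a ≠ b ∧ a ≠ c ∧ b ≠ c := by
  classical
  obtain ⟨a, b, hab⟩ := Fintype.exists_pair_of_one_lt_card (α := V) (by omega)
  have hcompl : (({a, b} : Finset V)ᶜ).Nonempty := by
    rw [← Finset.card_pos, Finset.card_compl]
    have h2 : ({a, b} : Finset V).card ≤ 2 := by
      refine le_trans (Finset.card_insert_le _ _) ?_
      simp
    omega
  obtain ⟨c, hc⟩ := hcompl
  simp only [Finset.mem_compl, Finset.mem_insert, Finset.mem_singleton, not_or] at hc
  exact ⟨a, b, c, hab, Ne.symm hc.1, Ne.symm hc.2⟩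

lemma internal_exists (hT : T.IsTree) [Fintype V] (hV : 3 ≤ Fintype.card V) :
    ∃ v, ¬ IsLeaf T v := by
  classical
  obtain ⟨a, b, c, hab, hac, hbc⟩ := exists_three hV
  by_cases h2 : ∃ x y : V, x ≠ y ∧ 2 ≤ T.dist x y
  · obtain ⟨x, y, hxy, hd⟩ := h2
    obtain ⟨p, hp⟩ := hT.isConnected.exists_walk_length_eq_dist x y
    have hnil : ¬ p.Nil := by rw [Walk.nil_iff_length_eq]; omega
    set v := p.getVert 1 with hv
    have hadj : T.Adj x v := Walk.adj_snd hnil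
    have hmem : v ∈ p.support := Walk.mem_support_iff_exists_getVert.2 ⟨1, rfl, by omega⟩
    have hadd := dist_add_of_mem_support p hp hmem
    have h1 : T.dist x v = 1 := dist_adj hadj
    have hvx : v ≠ x := fun h => by rw [h] at h1; simp at h1
    have hvy : v ≠ y := by
      intro h
      rw [h] at h1
      omega
    exact ⟨v, btw_not_leaf hT hadd hvx hvy⟩
  · push_neg at h2
    have hall : ∀ x y : V, x ≠ y → T.Adj x y := by
      intro x y hxy
      have := h2 x y hxy
      have hp : 1 ≤ T.dist x y := hT.isConnected.pos_dist_of_ne hxy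
      have : T.dist x y = 1 := by omega
      exact (dist_eq_one_iff_adj (G := T)).1 this
    exfalso
    have h1 := dist_adj (G := T) (hall a b hab)
    have h2' := dist_adj (G := T) (hall a c hac)
    have := tree_adj_dist_ne hT (hall b c hbc) a
    rw [h1, h2'] at this
    exact this rfl

/-- There is a leaf in every branch. -/
lemma leaf_in_dir (hT : T.IsTree) [Fintype V] {s n : V} (hadj : T.Adj s n) :
    ∃ l, IsLeaf T l ∧ Dir T s n l := by
  classical
  set B : Finset V := Finset.univ.filter (fun x => Dir T s n x) with hB
  have hnB : n ∈ B := by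
    rw [hB, Finset.mem_filter]
    refine ⟨Finset.mem_univ _, hadj, ?_⟩
    rw [dist_adj hadj.symm, SimpleGraph.dist_self]
  obtain ⟨l, hl, hmax⟩ := Finset.exists_max_image B (fun x => T.dist s x) ⟨n, hnB⟩
  rw [hB, Finset.mem_filter] at hl
  have hdir : Dir T s n l := hl.2
  refine ⟨l, ?_, hdir⟩
  have hls : l ≠ s := hdir.ne
  obtain ⟨c, hc⟩ := dir_exists hT (Ne.symm hls)
  -- c is the unique neighbor of l towards s
  intro a b ha hb
  have key : ∀ z, T.Adj l z → z = c := by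
    intro z hz
    rcases tree_adj_dist hT hz s with h | h
    · -- dist s z = dist s l + 1 : z further away, in branch n, contradicting maximality
      exfalso
      have hzB : z ∈ B := by
        rw [hB, Finset.mem_filter]
        refine ⟨Finset.mem_univ _, hadj, ?_⟩
        -- dist z s = dist z n + 1
        have h1 : T.dist z n ≤ T.dist z l + T.dist l n := hT.isConnected.dist_triangle
        have h2 : T.dist z l = 1 := dist_adj hz.symm
        have h3 : T.dist l s = T.dist l n + 1 := hdir.2
        have h4 : T.dist z s ≤ T.dist z n + T.dist n s := hT.isConnected.dist_triangle
        have h5 : T.dist n s = 1 := dist_adj hadj.symm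
        have h6 : T.dist z s = T.dist s z := SimpleGraph.dist_comm
        have h7 : T.dist l s = T.dist s l := SimpleGraph.dist_comm
        omega
      have := hmax z hzB
      omega
    · -- Dir l z s
      exact dir_unique hT ⟨hz, h⟩ hc
  rw [key a ha, key b hb]

/-- helper to compute gpNum -/
lemma gpNum_eq_of {G : SimpleGraph V} [Fintype V] {m : ℕ}
    (hub : ∀ F : Finset V, _root_.IsGPSet G ↑F → F.card ≤ m)
    (hex : ∃ F : Finset V, _root_.IsGPSet G ↑F ∧ F.card = m) :
    _root_.gpNum G = m := by
  apply le_antisymm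
  · apply csSup_le
    · obtain ⟨F, h1, h2⟩ := hex
      exact ⟨m, F, h1, h2⟩
    · rintro n ⟨F, h1, h2⟩
      exact h2 ▸ hub F h1
  · apply le_csSup
    · refine ⟨m, ?_⟩
      rintro n ⟨F, h1, h2⟩
      exact h2 ▸ hub F h1
    · exact hex

noncomputable def leaves (T : SimpleGraph V) [Fintype V] : Finset V :=
  letI := Classical.decPred (IsLeaf T)
  Finset.univ.filter (IsLeaf T)

lemma mem_leaves [Fintype V] {v : V} : v ∈ leaves T ↔ IsLeaf T v := by
  classical
  simp [leaves]

lemma leaves_isGPSet (hT : T.IsTree) [Fintype V] : IsGPSet T ↑(leaves T) := by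
  intro u hu v hv w hw huv hvw huw
  rintro ⟨-, heq⟩
  rw [Finset.mem_coe, mem_leaves] at hv
  exact btw_not_leaf hT heq (Ne.symm huv) hvw hv

/-- key: in a GP set of a tree, for s in S all other points lie in one branch, giving a leaf
`l` with `s` between `l` and every other point of `S`. -/
lemma tree_gp_card_le (hT : T.IsTree) [Fintype V] (hV : 2 ≤ Fintype.card V)
    (S : Finset V) (hS : IsGPSet T ↑S) : S.card ≤ (leaves T).card := by
  classical
  rcases le_or_gt S.card 1 with h1 | h1
  · obtain ⟨l, hl⟩ := leaf_exists hT hV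
    have : 1 ≤ (leaves T).card := Finset.card_pos.2 ⟨l, mem_leaves.2 hl⟩
    omega
  -- choose for each s ∈ S a leaf
  have hex : ∀ s : V, ∃ l : V, s ∈ S → (IsLeaf T l ∧
      ∀ t ∈ S, t ≠ s → T.dist l s + T.dist s t = T.dist l t) := by
    intro s
    by_cases hs : s ∈ S
    swap
    · exact ⟨s, fun h => absurd h hs⟩
    by_cases hleaf : IsLeaf T s
    · refine ⟨s, fun _ => ⟨hleaf, fun t ht hts => ?_⟩⟩
      rw [SimpleGraph.dist_self]
      simp
    · -- s is internal: all other points of S lie in one branch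
      obtain ⟨t0, ht0, ht0s⟩ := Finset.exists_mem_ne h1 s
      obtain ⟨d0, hd0⟩ := dir_exists hT ht0s
      have hdirall : ∀ t ∈ S, t ≠ s → Dir T s d0 t := by
        intro t ht hts
        by_cases htt0 : t = t0
        · exact htt0 ▸ hd0
        obtain ⟨dt, hdt⟩ := dir_exists hT hts
        by_cases hd : dt = d0
        · exact hd ▸ hdt
        · exfalso
          have hbtw := dir_btw hT hd0 hdt (Ne.symm hd)
          exact hS t0 ht0 s hs t ht ht0s (Ne.symm hts)
            (fun h => htt0 h.symm) ⟨hT.isConnected.preconnected t0 t, hbtw⟩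
      -- pick a neighbor n ≠ d0
      have : ¬ (∀ a b : V, T.Adj s a → T.Adj s b → a = b) := hleaf
      push_neg at this
      obtain ⟨a, b, ha, hb, hab⟩ := this
      have hn : ∃ n, T.Adj s n ∧ n ≠ d0 := by
        by_cases haa : a = d0
        · exact ⟨b, hb, fun h => hab (haa ▸ h ▸ rfl)⟩
        · exact ⟨a, ha, haa⟩
      obtain ⟨n, hn1, hn2⟩ := hn
      obtain ⟨l, hl1, hl2⟩ := leaf_in_dir hT hn1
      refine ⟨l, fun _ => ⟨hl1, fun t ht hts => dir_btw hT hl2 (hdirall t ht hts) ?_⟩⟩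
      exact hn2
  choose f hf using hex
  apply Finset.card_le_card_of_injOn f
  · intro s hs
    rw [Finset.mem_coe, mem_leaves]
    exact ((hf s) hs).1
  · intro s hs t ht hst
    by_contra hne
    have h1 := ((hf s) hs).2 t ht (Ne.symm hne)
    have h2 := ((hf t) ht).2 s hs hne
    rw [hst] at h1
    have h3 : T.dist s t = T.dist t s := SimpleGraph.dist_comm
    have h4 : T.dist (f t) s = T.dist s (f t) := SimpleGraph.dist_comm
    have h5 : T.dist (f t) t = T.dist t (f t) := SimpleGraph.dist_comm
    have : T.dist s t = 0 := by omega
    exact hne (hT.isConnected.dist_eq_zero_iff.mp this)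

lemma boxProd_dist_le {G : SimpleGraph V} {H : SimpleGraph W}
    (hG : G.Connected) (hH : H.Connected) (a c : V) (b d : W) :
    (G □ H).dist (a, b) (c, d) ≤ G.dist a c + H.dist b d := by
  obtain ⟨p, hp⟩ := hG.exists_walk_length_eq_dist a c
  obtain ⟨q, hq⟩ := hH.exists_walk_length_eq_dist b d
  have hl1 : (p.boxProdLeft H b).length = p.length := by
    simp [Walk.boxProdLeft]
    exact Walk.length_map _ _
  have hl2 : (q.boxProdRight G c).length = q.length := by
    simp [Walk.boxProdRight]
    exact Walk.length_map _ _
  have := (G □ H).dist_le ((p.boxProdLeft H b).append (q.boxProdRight G c))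
  rwa [Walk.length_append, hl1, hl2, hp, hq] at this

lemma boxProd_walk_ge {G : SimpleGraph V} {H : SimpleGraph W}
    (hG : G.Connected) (hH : H.Connected) :
    ∀ (x y : V × W) (w : (G □ H).Walk x y), G.dist x.1 y.1 + H.dist x.2 y.2 ≤ w.length := by
  intro x y w
  induction w with
  | nil => simp
  | @cons u v y h p ih =>
    rw [Walk.length_cons]
    rcases SimpleGraph.boxProd_adj.1 h with ⟨hadj, heq⟩ | ⟨hadj, heq⟩
    · have h1 : G.dist u.1 y.1 ≤ 1 + G.dist v.1 y.1 := by
        have t := hG.dist_triangle (u := u.1) (v := v.1) (w := y.1)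
        have : G.dist u.1 v.1 = 1 := (dist_eq_one_iff_adj (G := G)).2 hadj
        omega
      have h2 : H.dist u.2 y.2 = H.dist v.2 y.2 := by rw [heq]
      omega
    · have h1 : H.dist u.2 y.2 ≤ 1 + H.dist v.2 y.2 := by
        have t := hH.dist_triangle (u := u.2) (v := v.2) (w := y.2)
        have : H.dist u.2 v.2 = 1 := (dist_eq_one_iff_adj (G := H)).2 hadj
        omega
      have h2 : G.dist u.1 y.1 = G.dist v.1 y.1 := by rw [heq]
      omega

lemma boxProd_dist {G : SimpleGraph V} {H : SimpleGraph W}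
    (hG : G.Connected) (hH : H.Connected) (a c : V) (b d : W) :
    (G □ H).dist (a, b) (c, d) = G.dist a c + H.dist b d := by
  refine le_antisymm (boxProd_dist_le hG hH a c b d) ?_
  obtain ⟨w, hw⟩ := (hG.boxProd hH).exists_walk_length_eq_dist (a, b) (c, d)
  have := boxProd_walk_ge hG hH (a, b) (c, d) w
  rw [hw] at this
  exact this

/-- betweenness in the box product decomposes componentwise -/
lemma boxProd_btw_iff {G : SimpleGraph V} {H : SimpleGraph W}
    (hG : G.Connected) (hH : H.Connected) (u v w : V × W) :
    (G □ H).dist u v + (G □ H).dist v w = (G □ H).dist u w ↔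
      (G.dist u.1 v.1 + G.dist v.1 w.1 = G.dist u.1 w.1 ∧
       H.dist u.2 v.2 + H.dist v.2 w.2 = H.dist u.2 w.2) := by
  obtain ⟨u1, u2⟩ := u
  obtain ⟨v1, v2⟩ := v
  obtain ⟨w1, w2⟩ := w
  rw [boxProd_dist hG hH, boxProd_dist hG hH, boxProd_dist hG hH]
  simp only
  have t1 : G.dist u1 w1 ≤ G.dist u1 v1 + G.dist v1 w1 := hG.dist_triangle
  have t2 : H.dist u2 w2 ≤ H.dist u2 v2 + H.dist v2 w2 := hH.dist_triangle
  omega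

lemma lower_bound_set {T : SimpleGraph V} {T' : SimpleGraph W} [Fintype V] [Fintype W]
    (hT : T.IsTree) (hT' : T'.IsTree) {x0 : V} {y0 : W}
    (hx0 : ¬ IsLeaf T x0) (hy0 : ¬ IsLeaf T' y0) :
    ∃ S : Finset (V × W), IsGPSet (T □ T') ↑S ∧
      S.card = (leaves T).card + (leaves T').card := by
  classical
  set S : Finset (V × W) :=
    (leaves T).image (fun a => (a, y0)) ∪ (leaves T').image (fun b => (x0, b)) with hSdef
  have hmem : ∀ p : V × W, p ∈ S ↔
      ((p.2 = y0 ∧ IsLeaf T p.1) ∨ (p.1 = x0 ∧ IsLeaf T' p.2)) := by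
    intro p
    rw [hSdef, Finset.mem_union, Finset.mem_image, Finset.mem_image]
    constructor
    · rintro (⟨a, ha, rfl⟩ | ⟨b, hb, rfl⟩)
      · exact Or.inl ⟨rfl, mem_leaves.1 ha⟩
      · exact Or.inr ⟨rfl, mem_leaves.1 hb⟩
    · rintro (⟨h1, h2⟩ | ⟨h1, h2⟩)
      · exact Or.inl ⟨p.1, mem_leaves.2 h2, by rw [← h1]⟩
      · exact Or.inr ⟨p.2, mem_leaves.2 h2, by rw [← h1]⟩
  refine ⟨S, ?_, ?_⟩
  · intro u hu v hv w hw huv hvw huw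
    rintro ⟨-, heq⟩
    rw [Finset.mem_coe, hmem] at hu hv hw
    rw [boxProd_btw_iff hT.isConnected hT'.isConnected] at heq
    obtain ⟨hA, hB⟩ := heq
    have dzT : ∀ x y : V, T.dist x y = 0 → x = y := fun x y h =>
      hT.isConnected.dist_eq_zero_iff.mp h
    have dzT' : ∀ x y : W, T'.dist x y = 0 → x = y := fun x y h =>
      hT'.isConnected.dist_eq_zero_iff.mp h
    rcases hv with ⟨hv2, hvleaf⟩ | ⟨hv1, hvleaf⟩
    · -- v = (a, y0) with a = v.1 leaf
      have hvx0 : v.1 ≠ x0 := fun h => hx0 (h ▸ hvleaf)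
      rcases hu with ⟨hu2, huleaf⟩ | ⟨hu1, huleaf⟩ <;>
        rcases hw with ⟨hw2, hwleaf⟩ | ⟨hw1, hwleaf⟩
      · -- u, w type A
        have huv1 : u.1 ≠ v.1 := fun h => huv (Prod.ext h (hu2.trans hv2.symm))
        have hvw1 : v.1 ≠ w.1 := fun h => hvw (Prod.ext h (hv2.trans hw2.symm))
        exact btw_not_leaf hT hA (Ne.symm huv1) hvw1 hvleaf
      · -- u type A, w type B
        have huv1 : u.1 ≠ v.1 := fun h => huv (Prod.ext h (hu2.trans hv2.symm))
        have hvw1 : v.1 ≠ w.1 := fun h => hvx0 (h.trans hw1)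
        exact btw_not_leaf hT hA (Ne.symm huv1) hvw1 hvleaf
      · -- u type B, w type A
        have huv1 : u.1 ≠ v.1 := fun h => hvx0 (h.symm.trans hu1)
        have hvw1 : v.1 ≠ w.1 := fun h => hvw (Prod.ext h (hv2.trans hw2.symm))
        exact btw_not_leaf hT hA (Ne.symm huv1) hvw1 hvleaf
      · -- u, w type B : T-side collapses
        rw [hu1, hw1, SimpleGraph.dist_self] at hA
        have : T.dist x0 v.1 = 0 := by omega
        exact hvx0 (dzT _ _ this).symm
    · -- v = (x0, b) with b = v.2 leaf
      have hvy0 : v.2 ≠ y0 := fun h => hy0 (h ▸ hvleaf)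
      rcases hu with ⟨hu2, huleaf⟩ | ⟨hu1, huleaf⟩ <;>
        rcases hw with ⟨hw2, hwleaf⟩ | ⟨hw1, hwleaf⟩
      · -- u, w type A : T'-side collapses
        rw [hu2, hw2, SimpleGraph.dist_self] at hB
        have : T'.dist y0 v.2 = 0 := by omega
        exact hvy0 (dzT' _ _ this).symm
      · -- u type A, w type B
        have huv2 : u.2 ≠ v.2 := fun h => hvy0 (h.symm.trans hu2)
        have hvw2 : v.2 ≠ w.2 := fun h => hvw (Prod.ext (hv1.trans hw1.symm) h)
        exact btw_not_leaf hT' hB (Ne.symm huv2) hvw2 hvleaf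
      · -- u type B, w type A
        have huv2 : u.2 ≠ v.2 := fun h => huv (Prod.ext (hu1.trans hv1.symm) h)
        have hvw2 : v.2 ≠ w.2 := fun h => hvy0 (h.trans hw2)
        exact btw_not_leaf hT' hB (Ne.symm huv2) hvw2 hvleaf
      · -- u, w type B
        have huv2 : u.2 ≠ v.2 := fun h => huv (Prod.ext (hu1.trans hv1.symm) h)
        have hvw2 : v.2 ≠ w.2 := fun h => hvw (Prod.ext (hv1.trans hw1.symm) h)
        exact btw_not_leaf hT' hB (Ne.symm huv2) hvw2 hvleaf
  · rw [hSdef]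
    rw [Finset.card_union_of_disjoint, Finset.card_image_of_injective, Finset.card_image_of_injective]
    · intro b1 b2 h; exact (Prod.ext_iff.1 h).2
    · intro a1 a2 h; exact (Prod.ext_iff.1 h).1
    · rw [Finset.disjoint_left]
      rintro p hp1 hp2
      rw [Finset.mem_image] at hp1 hp2
      obtain ⟨a, ha, rfl⟩ := hp1
      obtain ⟨b, hb, hab⟩ := hp2
      have : x0 = a := (Prod.ext_iff.1 hab).1
      exact hx0 (this ▸ mem_leaves.1 ha)

lemma box_gp_card_le {T : SimpleGraph V} {T' : SimpleGraph W} [Fintype V] [Fintype W]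
    (hT : T.IsTree) (hT' : T'.IsTree) (hV : 2 ≤ Fintype.card V) (hW : 2 ≤ Fintype.card W)
    (S : Finset (V × W)) (hS : IsGPSet (T □ T') ↑S) :
    S.card ≤ (leaves T).card + (leaves T').card := by
  classical
  obtain ⟨lv0, hlv0⟩ := leaf_exists hT hV
  obtain ⟨lw0, hlw0⟩ := leaf_exists hT' hW
  have hlc1 : 1 ≤ (leaves T).card := Finset.card_pos.2 ⟨lv0, mem_leaves.2 hlv0⟩
  have hlc2 : 1 ≤ (leaves T').card := Finset.card_pos.2 ⟨lw0, mem_leaves.2 hlw0⟩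
  rcases le_or_gt S.card 1 with h1 | h1
  · omega
  -- pair lemma
  have hPL : ∀ s ∈ S, ∀ t ∈ S, ∀ u ∈ S, t ≠ s → u ≠ s → t ≠ u →
      (∃ a, Dir T s.1 a t.1 ∧ Dir T s.1 a u.1) ∨
      (∃ b, Dir T' s.2 b t.2 ∧ Dir T' s.2 b u.2) := by
    intro s hs t ht u hu hts hus htu
    by_contra hcon
    push_neg at hcon
    obtain ⟨hX, hY⟩ := hcon
    have btwT : T.dist t.1 s.1 + T.dist s.1 u.1 = T.dist t.1 u.1 := by
      by_cases h1 : t.1 = s.1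
      · rw [h1, SimpleGraph.dist_self]; omega
      by_cases h2 : u.1 = s.1
      · rw [h2, SimpleGraph.dist_self]; omega
      obtain ⟨dt, hdt⟩ := dir_exists hT h1
      obtain ⟨du, hdu⟩ := dir_exists hT h2
      have hne : dt ≠ du := fun h => hX dt hdt (h ▸ hdu)
      exact dir_btw hT hdt hdu hne
    have btwT' : T'.dist t.2 s.2 + T'.dist s.2 u.2 = T'.dist t.2 u.2 := by
      by_cases h1 : t.2 = s.2
      · rw [h1, SimpleGraph.dist_self]; omega
      by_cases h2 : u.2 = s.2
      · rw [h2, SimpleGraph.dist_self]; omega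
      obtain ⟨dt, hdt⟩ := dir_exists hT' h1
      obtain ⟨du, hdu⟩ := dir_exists hT' h2
      have hne : dt ≠ du := fun h => hY dt hdt (h ▸ hdu)
      exact dir_btw hT' hdt hdu hne
    exact hS t ht s hs u hu hts (Ne.symm hus) htu
      ⟨(hT.isConnected.boxProd hT'.isConnected).preconnected t u,
        (boxProd_btw_iff hT.isConnected hT'.isConnected t s u).2 ⟨btwT, btwT'⟩⟩
  -- dichotomy
  have hdich : ∀ s ∈ S,
      (∃ a, T.Adj s.1 a ∧ ∀ t ∈ S, t ≠ s → Dir T s.1 a t.1) ∨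
      (∃ b, T'.Adj s.2 b ∧ ∀ t ∈ S, t ≠ s → Dir T' s.2 b t.2) := by
    intro s hs
    obtain ⟨t0, ht0, ht0s⟩ := Finset.exists_mem_ne h1 s
    by_cases hcase : ∀ t ∈ S, t ≠ s → ∃ a, Dir T s.1 a t.1 ∧ Dir T s.1 a t0.1
    · obtain ⟨a0, ha0t, ha0⟩ := hcase t0 ht0 ht0s
      left
      refine ⟨a0, ha0.1, fun t ht hts => ?_⟩
      obtain ⟨a, h1', h2'⟩ := hcase t ht hts
      rwa [dir_unique hT h2' ha0] at h1'
    · push_neg at hcase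
      obtain ⟨t1, ht1, ht1s, hshare⟩ := hcase
      right
      by_cases ht10 : t1 = t0
      · have ht01 : t0.1 = s.1 := by
          by_contra hne
          obtain ⟨a, ha⟩ := dir_exists hT hne
          exact hshare a (ht10 ▸ ha) ha
        have ht02 : t0.2 ≠ s.2 := fun h => ht0s (Prod.ext ht01 h)
        obtain ⟨b0, hb0⟩ := dir_exists hT' ht02
        refine ⟨b0, hb0.1, fun t ht hts => ?_⟩
        by_cases htt0 : t = t0
        · rw [htt0]; exact hb0
        rcases hPL s hs t ht t0 ht0 hts ht0s htt0 with ⟨a, hat, hat0⟩ | ⟨b, hbt, hbt0⟩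
        · exact absurd ht01 (hat0.ne)
        · rwa [dir_unique hT' hbt0 hb0] at hbt
      · rcases hPL s hs t1 ht1 t0 ht0 ht1s ht0s ht10 with ⟨a, hat1, hat0⟩ | ⟨b0, hb1, hb0⟩
        · exact absurd (hshare a hat1 hat0) not_false
        refine ⟨b0, hb1.1, fun t ht hts => ?_⟩
        by_cases htt0 : t = t0
        · rw [htt0]; exact hb0
        by_cases htt1 : t = t1
        · rw [htt1]; exact hb1
        rcases hPL s hs t ht t0 ht0 hts ht0s htt0 with ⟨a, hat, hat0⟩ | ⟨b, hbt, hbt0⟩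
        · rcases hPL s hs t ht t1 ht1 hts ht1s htt1 with ⟨a', hat', hat1⟩ | ⟨b, hbt, hbt1⟩
          · have : a' = a := dir_unique hT hat' hat
            exact absurd (hshare a (this ▸ hat1) hat0) not_false
          · rwa [dir_unique hT' hbt1 hb1] at hbt
        · rwa [dir_unique hT' hbt0 hb0] at hbt
  -- good leaves
  have hgood : ∀ s ∈ S,
      (∃ lv, IsLeaf T lv ∧ ∀ t ∈ S, t ≠ s →
        (T.dist lv s.1 + T.dist s.1 t.1 = T.dist lv t.1 ∧ t.1 ≠ s.1)) ∨
      (∃ lw, IsLeaf T' lw ∧ ∀ t ∈ S, t ≠ s →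
        (T'.dist lw s.2 + T'.dist s.2 t.2 = T'.dist lw t.2 ∧ t.2 ≠ s.2)) := by
    intro s hs
    rcases hdich s hs with ⟨a, hadj, hall⟩ | ⟨b, hadj, hall⟩
    · left
      by_cases hleaf : IsLeaf T s.1
      · refine ⟨s.1, hleaf, fun t ht hts => ⟨?_, (hall t ht hts).ne⟩⟩
        rw [SimpleGraph.dist_self]
        simp
      · have : ¬ (∀ x y : V, T.Adj s.1 x → T.Adj s.1 y → x = y) := hleaf
        push_neg at this
        obtain ⟨x, y, hx, hy, hxy⟩ := this
        have hn : ∃ n, T.Adj s.1 n ∧ n ≠ a := by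
          by_cases hxa : x = a
          · exact ⟨y, hy, fun h => hxy (hxa ▸ h ▸ rfl)⟩
          · exact ⟨x, hx, hxa⟩
        obtain ⟨n, hn1, hn2⟩ := hn
        obtain ⟨l, hl1, hl2⟩ := leaf_in_dir hT hn1
        exact ⟨l, hl1, fun t ht hts =>
          ⟨dir_btw hT hl2 (hall t ht hts) hn2, (hall t ht hts).ne⟩⟩
    · right
      by_cases hleaf : IsLeaf T' s.2
      · refine ⟨s.2, hleaf, fun t ht hts => ⟨?_, (hall t ht hts).ne⟩⟩
        rw [SimpleGraph.dist_self]
        simp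
      · have : ¬ (∀ x y : W, T'.Adj s.2 x → T'.Adj s.2 y → x = y) := hleaf
        push_neg at this
        obtain ⟨x, y, hx, hy, hxy⟩ := this
        have hn : ∃ n, T'.Adj s.2 n ∧ n ≠ b := by
          by_cases hxa : x = b
          · exact ⟨y, hy, fun h => hxy (hxa ▸ h ▸ rfl)⟩
          · exact ⟨x, hx, hxa⟩
        obtain ⟨n, hn1, hn2⟩ := hn
        obtain ⟨l, hl1, hl2⟩ := leaf_in_dir hT' hn1
        exact ⟨l, hl1, fun t ht hts =>
          ⟨dir_btw hT' hl2 (hall t ht hts) hn2, (hall t ht hts).ne⟩⟩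
  -- choose assignment
  have hchoice : ∀ s : V × W, ∃ l : V ⊕ W, s ∈ S →
      ((∃ lv, l = Sum.inl lv ∧ IsLeaf T lv ∧ ∀ t ∈ S, t ≠ s →
        (T.dist lv s.1 + T.dist s.1 t.1 = T.dist lv t.1 ∧ t.1 ≠ s.1)) ∨
       (∃ lw, l = Sum.inr lw ∧ IsLeaf T' lw ∧ ∀ t ∈ S, t ≠ s →
        (T'.dist lw s.2 + T'.dist s.2 t.2 = T'.dist lw t.2 ∧ t.2 ≠ s.2))) := by
    intro s
    by_cases hs : s ∈ S
    · rcases hgood s hs with ⟨lv, h1', h2'⟩ | ⟨lw, h1', h2'⟩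
      · exact ⟨Sum.inl lv, fun _ => Or.inl ⟨lv, rfl, h1', h2'⟩⟩
      · exact ⟨Sum.inr lw, fun _ => Or.inr ⟨lw, rfl, h1', h2'⟩⟩
    · exact ⟨Sum.inl s.1, fun h => absurd h hs⟩
  choose f hf using hchoice
  have hcard : S.card ≤ ((leaves T).disjSum (leaves T')).card := by
    apply Finset.card_le_card_of_injOn f
    · intro s hs
      rcases hf s hs with ⟨lv, heq, hleaf, -⟩ | ⟨lw, heq, hleaf, -⟩
      · rw [heq, Finset.mem_coe, Finset.inl_mem_disjSum]
        exact mem_leaves.2 hleaf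
      · rw [heq, Finset.mem_coe, Finset.inr_mem_disjSum]
        exact mem_leaves.2 hleaf
    · intro s hs t ht hst
      by_contra hne
      rcases hf s hs with ⟨lv, heq1, hleaf1, hall1⟩ | ⟨lw, heq1, hleaf1, hall1⟩ <;>
        rcases hf t ht with ⟨lv', heq2, hleaf2, hall2⟩ | ⟨lw', heq2, hleaf2, hall2⟩
      · have hlv : lv = lv' := by
          rw [heq1, heq2] at hst
          exact Sum.inl.inj hst
        subst hlv
        obtain ⟨e1, hne1⟩ := hall1 t ht (Ne.symm hne)
        obtain ⟨e2, hne2⟩ := hall2 s hs hne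
        have hc : T.dist s.1 t.1 = T.dist t.1 s.1 := SimpleGraph.dist_comm
        have : T.dist s.1 t.1 = 0 := by omega
        exact hne1 (hT.isConnected.dist_eq_zero_iff.mp this).symm
      · rw [heq1, heq2] at hst; exact Sum.inl_ne_inr hst
      · rw [heq1, heq2] at hst; exact Sum.inr_ne_inl hst
      · have hlw : lw = lw' := by
          rw [heq1, heq2] at hst
          exact Sum.inr.inj hst
        subst hlw
        obtain ⟨e1, hne1⟩ := hall1 t ht (Ne.symm hne)
        obtain ⟨e2, hne2⟩ := hall2 s hs hne
        have hc : T'.dist s.2 t.2 = T'.dist t.2 s.2 := SimpleGraph.dist_comm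
        have : T'.dist s.2 t.2 = 0 := by omega
        exact hne1 (hT'.isConnected.dist_eq_zero_iff.mp this).symm
  rwa [Finset.card_disjSum] at hcard

end GPBox

open GPBox in
theorem gp_boxProd_trees [Fintype V] [Fintype W]
    (T : SimpleGraph V) (T' : SimpleGraph W)
    (hT : T.IsTree) (hT' : T'.IsTree)
    (hV : 3 ≤ Fintype.card V) (hW : 3 ≤ Fintype.card W) :
    gpNum (T □ T') = gpNum T + gpNum T' := by
  have hV2 : 2 ≤ Fintype.card V := by omega
  have hW2 : 2 ≤ Fintype.card W := by omega
  obtain ⟨x0, hx0⟩ := internal_exists hT hV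
  obtain ⟨y0, hy0⟩ := internal_exists hT' hW
  have h1 : gpNum T = (leaves T).card :=
    gpNum_eq_of (tree_gp_card_le hT hV2) ⟨leaves T, leaves_isGPSet hT, rfl⟩
  have h2 : gpNum T' = (leaves T').card :=
    gpNum_eq_of (tree_gp_card_le hT' hW2) ⟨leaves T', leaves_isGPSet hT', rfl⟩
  have h3 : gpNum (T □ T') = (leaves T).card + (leaves T').card :=
    gpNum_eq_of (box_gp_card_le hT hT' hV2 hW2) (lower_bound_set hT hT' hx0 hy0)
  rw [h1, h2, h3]
end

section
/- Let G be a finite connected simple graph and X ⊆ V(G). Then X is a total general position set of G if and only if every vertex of X is a simplicial vertex of G. Consequently, the total general position number gpt(G) equals the number of simplicial vertices of G. -/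
open SimpleGraph

variable {V : Type*}

/-- The pair `u, v` is `X`-positionable: every vertex of `X` on any shortest
`u,v`-path is an endpoint of the path. -/
def XPositionable (G : SimpleGraph V) (X : Set V) (u v : V) : Prop :=
  ∀ p : G.Walk u v, p.length = G.dist u v →
    ∀ w ∈ p.support, w ∈ X → w = u ∨ w = v

/-- `X` is a total general position set: every pair of vertices of `G` is
`X`-positionable. -/
def IsTotalGPSet (G : SimpleGraph V) (X : Set V) : Prop :=
  ∀ u v : V, XPositionable G X u v

/-- The total general position number of `G`. -/
noncomputable def gptNum (G : SimpleGraph V) [Fintype V] : ℕ :=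
  sSup {n | ∃ S : Finset V, IsTotalGPSet G ↑S ∧ S.card = n}

/-- A vertex is simplicial if its neighbourhood induces a clique. -/
def IsSimplicial (G : SimpleGraph V) (v : V) : Prop :=
  G.IsClique (G.neighborSet v)

lemma key (G : SimpleGraph V) (hG : G.Connected) (X : Set V) :
    IsTotalGPSet G X ↔ ∀ v ∈ X, IsSimplicial G v := by
  constructor
  · intro hX v hv a ha b hb hab
    by_contra hnadj
    have hva : G.Adj v a := ha
    have hvb : G.Adj v b := hb
    set p : G.Walk a b := Walk.cons hva.symm (Walk.cons hvb Walk.nil) with hp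
    have hle : G.dist a b ≤ 2 := by
      have := SimpleGraph.dist_le p
      simpa [hp] using this
    have h0 : G.dist a b ≠ 0 := by
      intro h; exact hab ((hG.dist_eq_zero_iff).mp h)
    have h1 : G.dist a b ≠ 1 := by
      intro h; exact hnadj (dist_eq_one_iff_adj.mp h)
    have h2 : G.dist a b = 2 := by omega
    have := hX a b p (by simp [hp, h2]) v (by simp [hp]) hv
    rcases this with h | h
    · exact G.irrefl (h ▸ hva)
    · exact G.irrefl (h ▸ hvb)
  · intro hX u v p hp w hw hwX
    classical
    by_contra hcon
    push_neg at hcon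
    obtain ⟨hwu, hwv⟩ := hcon
    -- split p at w
    have hspec := p.take_spec hw
    set q := p.takeUntil w hw with hq
    set r := p.dropUntil w hw with hr
    have hlen : q.length + r.length = p.length := by
      rw [← hspec, Walk.length_append]
    obtain ⟨b, hwb, r', hr'⟩ := r.exists_eq_cons_of_ne hwv
    obtain ⟨a, hwa, q'', hq''⟩ := q.reverse.exists_eq_cons_of_ne hwu
    have hqlen : q.length = q''.length + 1 := by
      have := congrArg Walk.length hq''
      simpa using this
    have hrlen : r.length = r'.length + 1 := by simp [hr']
    have hdistlt : ∀ (s : G.Walk u v), s.length < p.length → False := by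
      intro s hs
      have := SimpleGraph.dist_le s
      omega
    by_cases hab : a = b
    · subst hab
      exact hdistlt (q''.reverse.append r') (by
        rw [Walk.length_append, Walk.length_reverse]; omega)
    · have hadj : G.Adj a b := hX w hwX hwa hwb hab
      exact hdistlt (q''.reverse.append (Walk.cons hadj r')) (by
        rw [Walk.length_append, Walk.length_reverse, Walk.length_cons]; omega)

theorem totalGP_iff_simplicial [Fintype V] (G : SimpleGraph V) (hG : G.Connected) :
    (∀ X : Set V, IsTotalGPSet G X ↔ ∀ v ∈ X, IsSimplicial G v) ∧
      gptNum G = {v : V | IsSimplicial G v}.ncard := by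
  refine ⟨key G hG, ?_⟩
  classical
  set F : Finset V := {v : V | IsSimplicial G v}.toFinset with hF
  have hFmem : IsTotalGPSet G ↑F := by
    rw [key G hG]
    intro v hv
    simpa [hF] using hv
  have hmem : F.card ∈ {n | ∃ S : Finset V, IsTotalGPSet G ↑S ∧ S.card = n} :=
    ⟨F, hFmem, rfl⟩
  have hbdd : ∀ n ∈ {n | ∃ S : Finset V, IsTotalGPSet G ↑S ∧ S.card = n}, n ≤ F.card := by
    rintro n ⟨S, hS, rfl⟩
    apply Finset.card_le_card
    intro x hx
    have := (key G hG ↑S).mp hS x (by exact_mod_cast hx)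
    simp [hF, this]
  have : gptNum G = F.card := by
    unfold gptNum
    exact le_antisymm (csSup_le ⟨_, hmem⟩ hbdd) (le_csSup ⟨F.card, hbdd⟩ hmem)
  rw [this, hF, Set.ncard_eq_toFinset_card']
end

section
/- If r ≥ 2, then the edge general position number of the r-dimensional hypercube Q_r equals 2^r, i.e., gpe(Q_r) = 2^r. -/
open SimpleGraph

variable {V : Type*}

/-- A set `S` of edges of `G` is an edge general position set if no shortest path
of `G` contains three or more edges of `S`. -/
def IsEdgeGPSet [DecidableEq V] (G : SimpleGraph V) (S : Finset (Sym2 V)) : Prop :=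
  ↑S ⊆ G.edgeSet ∧
    ∀ (u v : V) (p : G.Walk u v), p.length = G.dist u v →
      (p.edges.toFinset ∩ S).card ≤ 2

/-- The edge general position number of `G`. -/
noncomputable def gpeNum [DecidableEq V] (G : SimpleGraph V) : ℕ :=
  sSup {n | ∃ S : Finset (Sym2 V), IsEdgeGPSet G S ∧ S.card = n}

/-- The `r`-dimensional hypercube `Q_r`: vertices are the functions `Fin r → Bool`,
two of them adjacent iff they differ in exactly one coordinate. -/
def hypercube (r : ℕ) : SimpleGraph (Fin r → Bool) where
  Adj u v := ∃ i, u i ≠ v i ∧ ∀ j, j ≠ i → u j = v j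
  symm := by
    constructor
    rintro u v ⟨i, h1, h2⟩
    exact ⟨i, h1.symm, fun j hj => (h2 j hj).symm⟩
  loopless := by
    constructor
    rintro u ⟨i, h1, -⟩
    exact h1 rfl


section HypercubeAux
open Finset
variable {r : ℕ}


instance : DecidableRel (hypercube r).Adj := fun u v =>
  decidable_of_iff (∃ i, u i ≠ v i ∧ ∀ j, j ≠ i → u j = v j) Iff.rfl

/-- set of coordinates where two vertices differ -/
def D (a b : Fin r → Bool) : Finset (Fin r) := univ.filter fun i => a i ≠ b i

lemma D_comm (a b : Fin r → Bool) : D a b = D b a := by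
  simp [D, ne_comm]

lemma D_self (a : Fin r → Bool) : D a a = ∅ := by simp [D]

lemma adj_iff {a b : Fin r → Bool} :
    (hypercube r).Adj a b ↔ ∃ i, a i ≠ b i ∧ ∀ j, j ≠ i → a j = b j := Iff.rfl

lemma D_eq_singleton_of_adj {a b : Fin r → Bool} (h : (hypercube r).Adj a b) :
    ∃ i, D a b = {i} := by
  obtain ⟨i, h1, h2⟩ := h
  refine ⟨i, ?_⟩
  ext j
  simp only [D, mem_filter, mem_univ, true_and, mem_singleton]
  constructor
  · intro hj; by_contra hne; exact hj (h2 j hne)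
  · rintro rfl; exact h1

lemma D_eq_of_mem_adj {a b : Fin r → Bool} (h : (hypercube r).Adj a b)
    {i : Fin r} (hi : i ∈ D a b) : D a b = {i} := by
  obtain ⟨j, hj⟩ := D_eq_singleton_of_adj h
  rw [hj] at hi ⊢
  simp only [mem_singleton] at hi
  rw [hi]

lemma adj_of_D {a b : Fin r → Bool} {i : Fin r} (h : D a b = {i}) :
    (hypercube r).Adj a b := by
  refine ⟨i, ?_, ?_⟩
  · have : i ∈ D a b := h ▸ mem_singleton_self i
    simpa [D] using this
  · intro j hj
    by_contra hne
    have : j ∈ D a b := by simpa [D] using hne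
    rw [h, mem_singleton] at this
    exact hj this

def dirs : ∀ {u v : Fin r → Bool}, (hypercube r).Walk u v → List (Finset (Fin r))
  | _, _, .nil => []
  | u, _, .cons (v := w) _ p => D u w :: dirs p

@[simp] lemma dirs_nil {u : Fin r → Bool} : dirs (.nil : (hypercube r).Walk u u) = [] := rfl

@[simp] lemma dirs_cons {u w v : Fin r → Bool} (h : (hypercube r).Adj u w)
    (p : (hypercube r).Walk w v) : dirs (.cons h p) = D u w :: dirs p := rfl

lemma dirs_length {u v : Fin r → Bool} (p : (hypercube r).Walk u v) :
    (dirs p).length = p.length := by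
  induction p with
  | nil => rfl
  | cons h p ih => simp [ih]

/-- every coordinate where endpoints differ appears as a (singleton) direction of the walk -/
lemma singleton_mem_dirs {u v : Fin r → Bool} (p : (hypercube r).Walk u v)
    {i : Fin r} (hi : i ∈ D u v) : ({i} : Finset (Fin r)) ∈ dirs p := by
  induction p with
  | nil => simp [D_self] at hi
  | @cons u w v h p ih =>
    simp only [D, mem_filter, mem_univ, true_and] at hi
    by_cases hw : w i = v i
    · have hiw : i ∈ D u w := by
        simp only [D, mem_filter, mem_univ, true_and]
        intro hc; exact hi (hc.trans hw)
      rw [dirs_cons, ← D_eq_of_mem_adj h hiw]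
      exact List.mem_cons_self
    · have : i ∈ D w v := by simp only [D, mem_filter, mem_univ, true_and]; exact hw
      rw [dirs_cons]
      exact List.mem_cons_of_mem _ (ih this)

lemma card_D_le_length {u v : Fin r → Bool} (p : (hypercube r).Walk u v) :
    (D u v).card ≤ p.length := by
  have h1 : (D u v).card ≤ (dirs p).toFinset.card := by
    apply Finset.card_le_card_of_injOn (fun i => ({i} : Finset (Fin r)))
    · intro i hi
      simpa using singleton_mem_dirs p hi
    · intro a _ b _ hab
      exact Finset.singleton_injective hab
  calc (D u v).card ≤ (dirs p).toFinset.card := h1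
    _ ≤ (dirs p).length := List.toFinset_card_le _
    _ = p.length := dirs_length p

lemma exists_walk_length_D : ∀ (n : ℕ) (u v : Fin r → Bool), (D u v).card = n →
    ∃ p : (hypercube r).Walk u v, p.length = n := by
  intro n
  induction n with
  | zero =>
    intro u v h
    have : u = v := by
      funext i
      by_contra hi
      have : i ∈ D u v := by simpa [D] using hi
      rw [Finset.card_eq_zero] at h
      simp [h] at this
    subst this
    exact ⟨.nil, rfl⟩
  | succ n ih =>
    intro u v h
    have hne : (D u v).Nonempty := by
      rw [← Finset.card_pos, h]; omega
    obtain ⟨i, hi⟩ := hne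
    have hiuv : u i ≠ v i := by simpa [D] using hi
    set u' := Function.update u i (v i) with hu'
    have hadj : (hypercube r).Adj u u' := by
      refine ⟨i, ?_, ?_⟩
      · simpa [hu', Function.update_self] using hiuv
      · intro j hj; simp [hu', Function.update_of_ne hj]
    have hD : D u' v = (D u v).erase i := by
      ext j
      simp only [D, mem_filter, mem_univ, true_and, Finset.mem_erase]
      by_cases hj : j = i
      · subst hj; simp [hu', Function.update_self]
      · simp [hu', Function.update_of_ne hj, hj]
    have hcard : (D u' v).card = n := by
      rw [hD, Finset.card_erase_of_mem hi, h]; omega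
    obtain ⟨p, hp⟩ := ih u' v hcard
    exact ⟨.cons hadj p, by simp [hp]⟩

lemma dist_eq_card_D (u v : Fin r → Bool) :
    (hypercube r).dist u v = (D u v).card := by
  obtain ⟨p, hp⟩ := exists_walk_length_D (D u v).card u v rfl
  refine le_antisymm (hp ▸ SimpleGraph.dist_le p) ?_
  have hreach : (hypercube r).Reachable u v := ⟨p⟩
  obtain ⟨q, hq⟩ := hreach.exists_walk_length_eq_dist
  calc (D u v).card ≤ q.length := card_D_le_length q
    _ = _ := hq

/-- on a shortest walk, the list of directions has no duplicates -/
lemma dirs_nodup {u v : Fin r → Bool} (p : (hypercube r).Walk u v)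
    (hp : p.length = (hypercube r).dist u v) : (dirs p).Nodup := by
  have h1 : (D u v).card ≤ (dirs p).toFinset.card := by
    apply Finset.card_le_card_of_injOn (fun i => ({i} : Finset (Fin r)))
    · intro i hi; simpa using singleton_mem_dirs p hi
    · intro a _ b _ hab; exact Finset.singleton_injective hab
  have h2 : (dirs p).toFinset.card ≤ (dirs p).length := List.toFinset_card_le _
  have h3 : (dirs p).length = (D u v).card := by
    rw [dirs_length, hp, dist_eq_card_D]
  have h4 : (dirs p).toFinset.card = (dirs p).length := by omega
  rw [List.card_toFinset] at h4
  have h5 : (dirs p).dedup = dirs p :=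
    (dirs p).dedup_sublist.eq_of_length h4
  exact List.dedup_eq_self.mp h5

/-- direction set of an edge, as a function on `Sym2` -/
def eD : Sym2 (Fin r → Bool) → Finset (Fin r) :=
  Sym2.lift ⟨D, D_comm⟩

@[simp] lemma eD_mk (a b : Fin r → Bool) : eD s(a, b) = D a b := rfl

lemma eD_mem_dirs {u v : Fin r → Bool} {p : (hypercube r).Walk u v}
    {e : Sym2 (Fin r → Bool)} (he : e ∈ p.edges) : eD e ∈ dirs p := by
  induction p with
  | nil => simp at he
  | @cons u w v h p ih =>
    rw [SimpleGraph.Walk.edges_cons, List.mem_cons] at he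
    rcases he with he | he
    · subst he; simp
    · exact List.mem_cons_of_mem _ (ih he)

lemma eD_singleton_of_edge {e : Sym2 (Fin r → Bool)} (he : e ∈ (hypercube r).edgeSet)
    {i : Fin r} (hi : i ∈ eD e) : eD e = {i} := by
  induction e with
  | _ a b =>
    rw [SimpleGraph.mem_edgeSet] at he
    simpa using D_eq_of_mem_adj he (by simpa using hi)

/-- on a shortest walk, at most one edge flips coordinate `i` -/
lemma filter_flip_le_one {u v : Fin r → Bool} (p : (hypercube r).Walk u v)
    (hnd : (dirs p).Nodup) (i : Fin r) :
    (p.edges.filter (fun e => decide (i ∈ eD e))).length ≤ 1 := by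
  induction p with
  | nil => simp
  | @cons u w v h p ih =>
    rw [SimpleGraph.Walk.edges_cons]
    rw [dirs_cons, List.nodup_cons] at hnd
    by_cases hiw : i ∈ D u w
    · have hsing : D u w = {i} := D_eq_of_mem_adj h hiw
      have hq : (p.edges.filter (fun e => decide (i ∈ eD e))) = [] := by
        rw [List.filter_eq_nil_iff]
        intro e he
        simp only [decide_eq_true_eq]
        intro hie
        have hees : e ∈ (hypercube r).edgeSet := p.edges_subset_edgeSet he
        have : eD e = {i} := eD_singleton_of_edge hees hie
        apply hnd.1
        have h2 : D u w = eD e := hsing.trans this.symm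
        rw [h2]
        exact eD_mem_dirs he
      simp [List.filter_cons, hq]
      split <;> simp
    · rw [List.filter_cons]
      have : ¬ (decide (i ∈ eD s(u, w)) = true) := by rw [eD_mk, decide_eq_true_iff]; exact hiw
      simp only [this, if_false, if_neg]
      exact ih hnd.2

/-- the class of edges in direction `i` -/
def Ecl (i : Fin r) : Finset (Sym2 (Fin r → Bool)) :=
  (hypercube r).edgeFinset.filter (fun e => i ∈ eD e)

def flp (i : Fin r) (v : Fin r → Bool) : Fin r → Bool := Function.update v i (!v i)

lemma D_flip (i : Fin r) (v : Fin r → Bool) : D v (flp i v) = {i} := by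
  ext j
  simp only [D, mem_filter, mem_univ, true_and, mem_singleton]; simp only [flp]
  by_cases hj : j = i
  · subst hj; simp [Function.update_self]
  · simp [Function.update_of_ne hj, hj]

lemma adj_flip (i : Fin r) (v : Fin r → Bool) : (hypercube r).Adj v (flp i v) :=
  adj_of_D (D_flip i v)

lemma flip_of_adj_mem {a b : Fin r → Bool} (h : (hypercube r).Adj a b) {i : Fin r}
    (hi : i ∈ D a b) : b = flp i a := by
  have hD : D a b = {i} := D_eq_of_mem_adj h hi
  funext j
  by_cases hj : j = i
  · subst hj
    have hj2 : j ∈ D a b := by rw [hD]; exact mem_singleton_self j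
    have : a j ≠ b j := by simpa [D] using hj2
    simp only [flp, Function.update_self]
    cases hb : b j <;> cases ha : a j <;> simp_all
  · have : j ∉ D a b := by rw [hD]; simpa using hj
    have haj : a j = b j := by simpa [D] using this
    simp [flp, Function.update_of_ne hj, haj]

lemma Ecl_eq_image (i : Fin r) :
    Ecl i = (univ.filter fun v : Fin r → Bool => v i = false).image
      (fun v => s(v, flp i v)) := by
  ext e
  simp only [Ecl, mem_filter, SimpleGraph.mem_edgeFinset, mem_image, mem_univ, true_and]
  constructor
  · rintro ⟨he, hi⟩
    induction e with
    | _ a b =>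
      rw [SimpleGraph.mem_edgeSet] at he
      rw [eD_mk] at hi
      have hb : b = flp i a := flip_of_adj_mem he hi
      have hne : a i ≠ b i := by simpa [D] using hi
      cases ha : a i
      · exact ⟨a, ha, by rw [hb]⟩
      · refine ⟨b, ?_, ?_⟩
        · cases hbi : b i
          · rfl
          · exact absurd (ha.trans hbi.symm) hne
        · have : a = flp i b := flip_of_adj_mem he.symm (by rwa [D_comm] at hi)
          rw [Sym2.eq_swap, this]
  · rintro ⟨v, hv, rfl⟩
    refine ⟨((hypercube r).mem_edgeSet).mpr (adj_flip i v), ?_⟩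
    rw [eD_mk, D_flip]
    exact mem_singleton_self i

lemma card_filter_false (i : Fin r) :
    (univ.filter fun v : Fin r → Bool => v i = false).card = 2 ^ (r - 1) := by
  have hr1 : 1 ≤ r := i.pos
  have key : (univ.filter fun v : Fin r → Bool => v i = false).card
      = (univ.filter fun v : Fin r → Bool => ¬ (v i = false)).card := by
    apply Finset.card_bij (fun v _ => flp i v)
    · intro v hv
      simp only [mem_filter, mem_univ, true_and] at hv ⊢
      simp [flp, Function.update_self, hv]
    · intro a ha b hb hab
      simp only [mem_filter, mem_univ, true_and] at ha hb
      funext j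
      have := congrFun hab j
      by_cases hj : j = i
      · subst hj; rw [ha, hb]
      · simpa [flp, Function.update_of_ne hj] using this
    · intro v hv
      simp only [mem_filter, mem_univ, true_and] at hv ⊢
      refine ⟨flp i v, ?_, ?_⟩
      · simp [flp, Function.update_self, Bool.not_eq_false] at hv ⊢
        simp [hv]
      · funext j
        by_cases hj : j = i
        · subst hj; simp [flp, Function.update_self]
        · simp [flp, Function.update_of_ne hj]
  have hsplit := Finset.card_filter_add_card_filter_not
    (s := (univ : Finset (Fin r → Bool))) (p := fun v => v i = false)
  have hcard : (univ : Finset (Fin r → Bool)).card = 2 ^ r := by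
    rw [Finset.card_univ, Fintype.card_fun]
    simp
  have h2 : 2 ^ r = 2 * 2 ^ (r - 1) := by
    have hss : r - 1 + 1 = r := Nat.sub_add_cancel hr1
    calc 2 ^ r = 2 ^ (r - 1 + 1) := by rw [hss]
      _ = 2 ^ (r - 1) * 2 := pow_succ 2 (r - 1)
      _ = 2 * 2 ^ (r - 1) := Nat.mul_comm _ _
  rw [hcard, ← key, h2] at hsplit
  have h3 : 2 * (univ.filter fun v : Fin r → Bool => v i = false).card
      = 2 * 2 ^ (r - 1) := by
    rw [Nat.two_mul]
    exact hsplit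
  exact Nat.eq_of_mul_eq_mul_left (by norm_num) h3

lemma card_Ecl (i : Fin r) : (Ecl i).card = 2 ^ (r - 1) := by
  rw [Ecl_eq_image, Finset.card_image_of_injOn, card_filter_false]
  intro a ha b hb hab
  simp only [Finset.coe_filter, mem_univ, true_and, Set.mem_setOf_eq] at ha hb
  rw [Sym2.eq_iff] at hab
  rcases hab with ⟨h1, _⟩ | ⟨h1, h2⟩
  · exact h1
  · exfalso
    have : a i = !(b i) := by rw [h1]; simp [flp, Function.update_self]
    rw [ha, hb] at this
    simp at this

lemma inter_Ecl_card_le_one {u v : Fin r → Bool} (p : (hypercube r).Walk u v)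
    (hp : p.length = (hypercube r).dist u v) (i : Fin r) :
    (p.edges.toFinset ∩ Ecl i).card ≤ 1 := by
  have hnd := dirs_nodup p hp
  have hsub : p.edges.toFinset ∩ Ecl i ⊆
      (p.edges.filter (fun e => decide (i ∈ eD e))).toFinset := by
    intro e he
    rw [Finset.mem_inter] at he
    rw [List.toFinset_filter, Finset.mem_filter]
    refine ⟨he.1, ?_⟩
    have := he.2
    simp only [Ecl, Finset.mem_filter] at this
    simpa using this.2
  calc (p.edges.toFinset ∩ Ecl i).card
      ≤ (p.edges.filter (fun e => decide (i ∈ eD e))).toFinset.card :=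
        Finset.card_le_card hsub
    _ ≤ (p.edges.filter (fun e => decide (i ∈ eD e))).length := List.toFinset_card_le _
    _ ≤ 1 := filter_flip_le_one p hnd i

lemma Ecl_isGP (i₀ i₁ : Fin r) : IsEdgeGPSet (hypercube r) (Ecl i₀ ∪ Ecl i₁) := by
  constructor
  · intro e he
    rw [Finset.mem_coe, Finset.mem_union] at he
    rcases he with he | he <;>
      · rw [Ecl, Finset.mem_filter, SimpleGraph.mem_edgeFinset] at he
        exact he.1
  · intro u v p hp
    have : p.edges.toFinset ∩ (Ecl i₀ ∪ Ecl i₁)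
        = (p.edges.toFinset ∩ Ecl i₀) ∪ (p.edges.toFinset ∩ Ecl i₁) :=
      Finset.inter_union_distrib_left _ _ _
    rw [this]
    calc ((p.edges.toFinset ∩ Ecl i₀) ∪ (p.edges.toFinset ∩ Ecl i₁)).card
        ≤ (p.edges.toFinset ∩ Ecl i₀).card + (p.edges.toFinset ∩ Ecl i₁).card :=
          Finset.card_union_le _ _
      _ ≤ 1 + 1 := Nat.add_le_add (inter_Ecl_card_le_one p hp i₀) (inter_Ecl_card_le_one p hp i₁)

lemma Ecl_disjoint {i₀ i₁ : Fin r} (h : i₀ ≠ i₁) : Disjoint (Ecl i₀) (Ecl i₁) := by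
  rw [Finset.disjoint_left]
  intro e he0 he1
  rw [Ecl, Finset.mem_filter, SimpleGraph.mem_edgeFinset] at he0 he1
  have h0 := eD_singleton_of_edge he0.1 he0.2
  have h1 := eD_singleton_of_edge he1.1 he1.2
  rw [h0] at h1
  exact h (Finset.singleton_injective h1)

lemma card_Ecl_union (hr : 2 ≤ r) :
    ((Ecl ⟨0, by omega⟩ : Finset (Sym2 (Fin r → Bool))) ∪ Ecl ⟨1, by omega⟩).card = 2 ^ r := by
  rw [Finset.card_union_of_disjoint (Ecl_disjoint (by simp [Fin.ext_iff]))]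
  rw [card_Ecl, card_Ecl]
  have hss : r - 1 + 1 = r := by omega
  calc 2 ^ (r - 1) + 2 ^ (r - 1) = 2 ^ (r - 1) * 2 := by ring
    _ = 2 ^ (r - 1 + 1) := (pow_succ 2 (r - 1)).symm
    _ = 2 ^ r := by rw [hss]

section Upper

variable {S : Finset (Sym2 (Fin r → Bool))}

/-- neighbors of `v` in the edge set `S` -/
def Nbr (S : Finset (Sym2 (Fin r → Bool))) (v : Fin r → Bool) : Finset (Fin r → Bool) :=
  univ.filter (fun u => s(v, u) ∈ S)

lemma mem_Nbr {v u : Fin r → Bool} : u ∈ Nbr S v ↔ s(v, u) ∈ S := by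
  rw [Nbr, mem_filter]
  simp

lemma adj_of_mem_Nbr (hS : ↑S ⊆ (hypercube r).edgeSet) {v u : Fin r → Bool}
    (hu : u ∈ Nbr S v) : (hypercube r).Adj v u :=
  ((hypercube r).mem_edgeSet).mp (hS (mem_Nbr.mp hu))

lemma mem_Nbr_symm {v u : Fin r → Bool} (hu : u ∈ Nbr S v) : v ∈ Nbr S u := by
  rw [mem_Nbr] at hu ⊢
  rwa [Sym2.eq_swap]

lemma sum_Nbr_card (hS : ↑S ⊆ (hypercube r).edgeSet) :
    ∑ v : Fin r → Bool, (Nbr S v).card = 2 * S.card := by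
  classical
  let G' := SimpleGraph.fromEdgeSet (↑S : Set (Sym2 (Fin r → Bool)))
  have hdeg : ∀ v, G'.degree v = (Nbr S v).card := by
    intro v
    rw [← SimpleGraph.card_neighborFinset_eq_degree]
    congr 1
    ext u
    rw [SimpleGraph.mem_neighborFinset, mem_Nbr]
    simp only [G', SimpleGraph.fromEdgeSet_adj, Finset.mem_coe]
    constructor
    · exact fun h => h.1
    · intro h
      exact ⟨h, (((hypercube r).mem_edgeSet).mp (hS h)).ne⟩
  have hedge : ∀ (inst : Fintype ↑G'.edgeSet), (@SimpleGraph.edgeFinset _ G' inst).card = S.card := by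
    intro inst
    congr 1
    ext e
    rw [SimpleGraph.mem_edgeFinset]
    simp only [G', SimpleGraph.edgeSet_fromEdgeSet, Set.mem_diff, Finset.mem_coe,
      Set.mem_setOf_eq]
    constructor
    · exact fun h => h.1
    · intro h
      exact ⟨h, SimpleGraph.not_isDiag_of_mem_edgeSet _ (hS h)⟩
  calc ∑ v : Fin r → Bool, (Nbr S v).card = ∑ v, G'.degree v :=
        Finset.sum_congr rfl (fun v _ => (hdeg v).symm)
    _ = 2 * S.card := by rw [G'.sum_degrees_eq_twice_card_edges, hedge]

lemma flp_apply (i : Fin r) (v : Fin r → Bool) (m : Fin r) :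
    flp i v m = if m = i then !(v m) else v m := by
  by_cases hm : m = i
  · subst hm; simp [flp, Function.update_self]
  · simp [flp, Function.update_of_ne hm, hm]

lemma flp_flp (i : Fin r) (v : Fin r → Bool) : flp i (flp i v) = v := by
  funext j
  by_cases hj : j = i <;> simp [flp_apply, hj]

/-- injectivity of direction map on neighbours -/
lemma D_injOn_Nbr (hS : ↑S ⊆ (hypercube r).edgeSet) {v : Fin r → Bool} :
    Set.InjOn (fun x => D v x) ↑(Nbr S v) := by
  intro a ha b hb hab
  have hab' : D v a = D v b := hab
  simp only [Finset.mem_coe] at ha hb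
  have hadja := adj_of_mem_Nbr hS ha
  have hadjb := adj_of_mem_Nbr hS hb
  obtain ⟨i, hi⟩ := D_eq_singleton_of_adj hadja
  have hia : i ∈ D v a := hi ▸ mem_singleton_self i
  have hib : i ∈ D v b := by
    have habi : D v b = {i} := by rw [← hab']; exact hi
    exact habi ▸ mem_singleton_self i
  rw [show a = flp i v from flip_of_adj_mem hadja hia,
    show b = flp i v from flip_of_adj_mem hadjb hib]

/-- KEY LEMMA: if `v` has at least 3 `S`-neighbours, each of its `S`-neighbours
has `v` as its only `S`-neighbour. -/
lemma key_lemma (hS : IsEdgeGPSet (hypercube r) S) {v u : Fin r → Bool}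
    (hv : 3 ≤ (Nbr S v).card) (hu : u ∈ Nbr S v) : Nbr S u = {v} := by
  have hSE := hS.1
  apply Finset.eq_singleton_iff_unique_mem.mpr
  refine ⟨mem_Nbr_symm hu, ?_⟩
  intro w hw
  by_contra hwv
  have hadj_vu : (hypercube r).Adj v u := adj_of_mem_Nbr hSE hu
  have hadj_uw : (hypercube r).Adj u w := adj_of_mem_Nbr hSE hw
  obtain ⟨i, hi⟩ := D_eq_singleton_of_adj hadj_vu
  obtain ⟨k, hk⟩ := D_eq_singleton_of_adj hadj_uw
  have hu_eq : u = flp i v := flip_of_adj_mem hadj_vu (hi ▸ mem_singleton_self i)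
  have hw_eq : w = flp k u := flip_of_adj_mem hadj_uw (hk ▸ mem_singleton_self k)
  have hik : i ≠ k := by
    rintro rfl
    exact hwv (by rw [hw_eq, hu_eq, flp_flp])
  -- find a third direction
  have himg : 3 ≤ ((Nbr S v).image (fun x => D v x)).card := by
    rwa [Finset.card_image_of_injOn (D_injOn_Nbr hSE)]
  have hex : ∃ s ∈ (Nbr S v).image (fun x => D v x),
      s ∉ ({D v u, D u w} : Finset (Finset (Fin r))) := by
    by_contra hcon
    push_neg at hcon
    have hsub : (Nbr S v).image (fun x => D v x) ⊆ {D v u, D u w} := hcon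
    have hle := Finset.card_le_card hsub
    have h2 : ({D v u, D u w} : Finset (Finset (Fin r))).card ≤ 2 :=
      (Finset.card_insert_le _ _).trans (by simp)
    omega
  obtain ⟨s, hs_mem, hs_not⟩ := hex
  obtain ⟨x, hx_mem, hx_eq⟩ := Finset.mem_image.mp hs_mem
  have hadj_vx : (hypercube r).Adj v x := adj_of_mem_Nbr hSE hx_mem
  obtain ⟨j, hj⟩ := D_eq_singleton_of_adj hadj_vx
  have hx_eq' : x = flp j v := flip_of_adj_mem hadj_vx (hj ▸ mem_singleton_self j)
  have hji : j ≠ i := by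
    rintro rfl
    exact hs_not (by rw [← hx_eq, hj, ← hi]; exact Finset.mem_insert_self _ _)
  have hjk : j ≠ k := by
    rintro rfl
    exact hs_not (by
      rw [← hx_eq, hj, ← hk]
      exact Finset.mem_insert_of_mem (mem_singleton_self _))
  -- compute D x w = {j, i, k}
  have hDxw : D x w = {j, i, k} := by
    ext m
    simp only [D, mem_filter, mem_univ, true_and, Finset.mem_insert, Finset.mem_singleton]
    rw [hx_eq', hw_eq, hu_eq]
    by_cases hmj : m = j <;> by_cases hmi : m = i <;> by_cases hmk : m = k <;>
      simp_all [flp_apply]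
  have hcard3 : (D x w).card = 3 := by
    rw [hDxw]
    rw [Finset.card_insert_of_notMem (by simp [hji, hjk]),
      Finset.card_insert_of_notMem (by simp [hik]), Finset.card_singleton]
  -- the shortest path x - v - u - w
  let q : (hypercube r).Walk x w :=
    .cons hadj_vx.symm (.cons hadj_vu (.cons hadj_uw .nil))
  have hqlen : q.length = (hypercube r).dist x w := by
    rw [dist_eq_card_D, hcard3]
    rfl
  have hgp := hS.2 x w q hqlen
  -- the three edges of q are in S and distinct
  have hqe : q.edges = [s(x, v), s(v, u), s(u, w)] := rfl
  have hxv : x ≠ v := fun h => hadj_vx.ne h.symm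
  have hvu : v ≠ u := hadj_vu.ne
  have hxu : x ≠ u := by
    rintro rfl
    apply hji
    have : ({j} : Finset (Fin r)) = {i} := by rw [← hj, ← hi]
    exact Finset.singleton_injective this
  have hvw : v ≠ w := fun h => hwv h.symm
  have hT : ({s(x, v), s(v, u), s(u, w)} : Finset (Sym2 (Fin r → Bool)))
      ⊆ q.edges.toFinset ∩ S := by
    intro e he
    rw [Finset.mem_inter]
    constructor
    · rw [List.mem_toFinset, hqe]
      simp only [Finset.mem_insert, Finset.mem_singleton] at he
      rcases he with rfl | rfl | rfl <;> simp
    · simp only [Finset.mem_insert, Finset.mem_singleton] at he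
      rcases he with rfl | rfl | rfl
      · rw [Sym2.eq_swap]; exact mem_Nbr.mp hx_mem
      · exact mem_Nbr.mp hu
      · exact mem_Nbr.mp hw
  have hne1 : s(x, v) ≠ s(v, u) := by simp only [Ne, Sym2.eq_iff]; tauto
  have hne2 : s(x, v) ≠ s(u, w) := by simp only [Ne, Sym2.eq_iff]; tauto
  have hne3 : s(v, u) ≠ s(u, w) := by simp only [Ne, Sym2.eq_iff]; tauto
  have hTcard : ({s(x, v), s(v, u), s(u, w)} : Finset (Sym2 (Fin r → Bool))).card = 3 :=
    Finset.card_eq_three.mpr ⟨_, _, _, hne1, hne2, hne3, rfl⟩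
  have := Finset.card_le_card hT
  omega

end Upper

lemma card_le_upper {S : Finset (Sym2 (Fin r → Bool))}
    (hS : IsEdgeGPSet (hypercube r) S) : S.card ≤ 2 ^ r := by
  classical
  set B := univ.filter (fun v : Fin r → Bool => 3 ≤ (Nbr S v).card) with hB
  set C := univ.filter (fun v : Fin r → Bool => ¬ 3 ≤ (Nbr S v).card) with hC
  set U := B.biUnion (Nbr S) with hU
  have hkey : ∀ v ∈ B, ∀ u ∈ Nbr S v, Nbr S u = {v} := by
    intro v hv u hu
    exact key_lemma hS (mem_filter.mp hv).2 hu
  have hUdeg : ∀ u ∈ U, (Nbr S u).card = 1 := by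
    intro u hu
    obtain ⟨v, hv, huv⟩ := Finset.mem_biUnion.mp hu
    rw [hkey v hv u huv, Finset.card_singleton]
  have hdisj : ∀ v1 ∈ B, ∀ v2 ∈ B, v1 ≠ v2 → Disjoint (Nbr S v1) (Nbr S v2) := by
    intro v1 h1 v2 h2 hne
    rw [Finset.disjoint_left]
    intro u hu1 hu2
    apply hne
    have e1 := hkey v1 h1 u hu1
    have e2 := hkey v2 h2 u hu2
    rw [e1] at e2
    exact Finset.singleton_injective e2
  have hUcard : U.card = ∑ v ∈ B, (Nbr S v).card := Finset.card_biUnion hdisj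
  have hUC : U ⊆ C := by
    intro u hu
    rw [hC, mem_filter]
    refine ⟨mem_univ _, ?_⟩
    rw [hUdeg u hu]
    omega
  have h2 : ∑ v ∈ B, (Nbr S v).card + ∑ v ∈ C, (Nbr S v).card
      = ∑ v : Fin r → Bool, (Nbr S v).card :=
    Finset.sum_filter_add_sum_filter_not _ _ _
  have h4 : ∑ v ∈ C \ U, (Nbr S v).card + ∑ v ∈ U, (Nbr S v).card
      = ∑ v ∈ C, (Nbr S v).card := Finset.sum_sdiff hUC
  have h5 : ∑ v ∈ U, (Nbr S v).card = U.card := by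
    rw [Finset.sum_congr rfl hUdeg]
    simp
  have h6 : ∑ v ∈ C \ U, (Nbr S v).card ≤ 2 * (C \ U).card := by
    rw [Nat.mul_comm]
    apply Finset.sum_le_card_nsmul
    intro v hv
    have := (mem_filter.mp (Finset.mem_sdiff.mp hv).1).2
    omega
  have h7 : U.card + (C \ U).card = C.card := by
    rw [Nat.add_comm]
    exact Finset.card_sdiff_add_card_eq_card hUC
  have h8 : C.card ≤ 2 ^ r := by
    calc C.card ≤ (univ : Finset (Fin r → Bool)).card := Finset.card_le_card (Finset.filter_subset _ _)
      _ = 2 ^ r := by rw [Finset.card_univ, Fintype.card_fun]; simp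
  have hsum := sum_Nbr_card hS.1
  omega

theorem gpe_hypercube' (r : ℕ) (hr : 2 ≤ r) :
    gpeNum (hypercube r) = 2 ^ r := by
  have hmem : (2 ^ r : ℕ) ∈ {n | ∃ S : Finset (Sym2 (Fin r → Bool)),
      IsEdgeGPSet (hypercube r) S ∧ S.card = n} :=
    ⟨Ecl ⟨0, by omega⟩ ∪ Ecl ⟨1, by omega⟩, Ecl_isGP _ _, card_Ecl_union hr⟩
  have hbdd : ∀ n ∈ {n | ∃ S : Finset (Sym2 (Fin r → Bool)),
      IsEdgeGPSet (hypercube r) S ∧ S.card = n}, n ≤ 2 ^ r := by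
    rintro n ⟨S, hS, rfl⟩
    exact card_le_upper hS
  refine le_antisymm ?_ ?_
  · exact csSup_le ⟨2 ^ r, hmem⟩ hbdd
  · exact le_csSup ⟨2 ^ r, hbdd⟩ hmem

end HypercubeAux

theorem gpe_hypercube (r : ℕ) (hr : 2 ≤ r) :
    gpeNum (hypercube r) = 2 ^ r := by
  exact gpe_hypercube' r hr
end
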